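/- arXiv:math/0011231 — 5 statements merged into one kernel-verified Lean document; each statement's English description precedes it below -/
import Mathlib

section
/- (Higman) Let ℤ_n (n < ω) be copies of the infinite cyclic group ℤ and let F be a free group. For every group homomorphism h : lim← *_{n<ω} ℤ_n → F there exist m < ω and a homomorphism h̄ : *_{n<m} ℤ_n → F such that h = h̄ ∘ p_m, where p_m : lim← *_{n<ω} ℤ_n → *_{n<m} ℤ_n is the canonical projection of the inverse limit to its m-th coordinate. -/
/-!
Suppose no `p_m` has kernel inside `ker h`, and pick `g N ∈ ker p_N` with `a N := h (g N) ≠ 1`.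
As `g N` is trivial at all levels `≤ N`, the infinite nested product
`w N = (g N * w (N + 1)) ^ d N` converges in the inverse limit for every choice of exponents,
and `b N := h (w N)` solves `b N = (a N * b (N + 1)) ^ d N` in the free group. There the length of
a nontrivial power `x ^ d` is at least `d` and at least `|x|` (cyclic reduction), so
`|b (N + 1)| ≤ |a N| + |b N|`, whence `|b N| ≤ |b 0| + ∑ i < N, |a i|`; exponents
`d N > N + ∑ i < N, |a i|` make this impossible. Finally `p_m` has a section (generators go to
`delta k`), so `ker p_m ≤ ker h` makes `h` factor through `p_m`.
-/

open Monoid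

noncomputable section
open scoped Classical

/-- The canonical bonding homomorphism `p_{mn} : *_{k<n} ℤ_k → *_{k<m} ℤ_k` for `m ≤ n`:
identity on `ℤ_k` for `k < m`, trivial on `ℤ_k` for `m ≤ k < n`. -/
def zbond {m n : ℕ} (_ : m ≤ n) :
    CoprodI (fun _ : Fin n => Multiplicative ℤ) →* CoprodI (fun _ : Fin m => Multiplicative ℤ) :=
  CoprodI.lift fun k =>
    if h : (k : ℕ) < m then
      (CoprodI.of (M := fun _ : Fin m => Multiplicative ℤ) (i := ⟨(k : ℕ), h⟩)) else 1

/-- The inverse limit `lim← *_{n<ω} ℤ_n` of the finite free products of copies of `ℤ`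
under the canonical bonding maps. -/
def ZLim : Subgroup (Π n : ℕ, CoprodI (fun _ : Fin n => Multiplicative ℤ)) where
  carrier := {x | ∀ ⦃m n : ℕ⦄ (h : m ≤ n), zbond h (x n) = x m}
  one_mem' := by intro m n h; simp
  mul_mem' := by intro a b ha hb m n h; simp only [Pi.mul_apply, map_mul, ha h, hb h]
  inv_mem' := by intro a ha m n h; simp only [Pi.inv_apply, map_inv, ha h]

/-- The canonical projection `p_m : lim← *_{n<ω} ℤ_n → *_{k<m} ℤ_k` to the `m`-th coordinate. -/
def zProj (m : ℕ) : ZLim →* CoprodI (fun _ : Fin m => Multiplicative ℤ) :=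
  (Pi.evalMonoidHom _ m).comp ZLim.subtype

/-- `δ_n ∈ lim← *_{n<ω} ℤ_n`: the element determined by the generator of the `n`-th copy of `ℤ`. -/
def delta (n : ℕ) : ZLim :=
  ⟨fun m => if h : n < m then
      CoprodI.of (M := fun _ : Fin m => Multiplicative ℤ) (i := ⟨n, h⟩)
        (Multiplicative.ofAdd (1 : ℤ))
    else 1, by
    intro m m' h
    dsimp only
    by_cases hn : n < m'
    · rw [dif_pos hn]
      simp only [zbond, CoprodI.lift_of]
      by_cases hnm : n < m
      · rw [dif_pos hnm, dif_pos hnm]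
      · rw [dif_neg hnm, dif_neg hnm, MonoidHom.one_apply]
    · rw [dif_neg hn, dif_neg (fun hc => hn (lt_of_lt_of_le hc h)), map_one]⟩

namespace FreeGroup
open reduceCyclically
variable {α : Type*} [DecidableEq α]

theorem norm_pow_succ (x : FreeGroup α) (n : ℕ) :
    norm (x ^ (n + 1)) =
      2 * (conjugator x.toWord).length + (n + 1) * (reduceCyclically x.toWord).length := by
  rw [norm, toWord_pow, reduce_flatten_replicate_succ isReduced_toWord]
  simp only [List.length_append, List.length_flatten, List.map_replicate, List.sum_replicate,
    invRev_length, smul_eq_mul]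
  ring

theorem reduceCyclically_toWord_ne_nil {x : FreeGroup α} (hx : x ≠ 1) :
    reduceCyclically x.toWord ≠ [] := by
  intro h
  have hx' := conj_conjugator_reduceCyclically x.toWord
  rw [h, List.append_nil] at hx'
  apply hx
  rw [← mk_toWord (x := x), ← hx', ← mul_mk, ← inv_mk, mul_inv_cancel]

theorem norm_le_norm_pow (x : FreeGroup α) {n : ℕ} (hn : n ≠ 0) : norm x ≤ norm (x ^ n) := by
  obtain ⟨k, rfl⟩ := Nat.exists_eq_add_one_of_ne_zero hn
  have hx := norm_pow_succ x 0
  rw [zero_add, pow_one] at hx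
  rw [hx, norm_pow_succ]
  gcongr
  omega

theorem le_norm_pow {x : FreeGroup α} (hx : x ≠ 1) (n : ℕ) : n ≤ norm (x ^ n) := by
  cases n with
  | zero => exact Nat.zero_le _
  | succ k =>
    have hr := List.length_pos_iff.2 (reduceCyclically_toWord_ne_nil hx)
    rw [norm_pow_succ]
    nlinarith

variable {a b : ℕ → FreeGroup α} {d : ℕ → ℕ}

theorem norm_succ_le_of_eq_mul_pow (hb : ∀ N, b N = (a N * b (N + 1)) ^ d N)
    (hd : ∀ N, d N ≠ 0) (N : ℕ) : norm (b (N + 1)) ≤ norm (a N) + norm (b N) :=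
  calc norm (b (N + 1)) = norm ((a N)⁻¹ * (a N * b (N + 1))) := by rw [inv_mul_cancel_left]
    _ ≤ norm (a N) + norm (a N * b (N + 1)) := by
      rw [← norm_inv_eq (x := a N)]; exact norm_mul_le _ _
    _ ≤ norm (a N) + norm (b N) := by
      rw [hb N]; gcongr; exact norm_le_norm_pow _ (hd N)

theorem norm_le_add_sum_of_eq_mul_pow (hb : ∀ N, b N = (a N * b (N + 1)) ^ d N)
    (hd : ∀ N, d N ≠ 0) (N : ℕ) :
    norm (b N) ≤ norm (b 0) + ∑ i ∈ Finset.range N, norm (a i) := by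
  induction N with
  | zero => simp
  | succ N ih =>
    rw [Finset.sum_range_succ]
    have := norm_succ_le_of_eq_mul_pow hb hd N
    omega

theorem mul_ne_one_of_eq_mul_pow (hb : ∀ N, b N = (a N * b (N + 1)) ^ d N)
    (ha : ∀ N, a N ≠ 1) (hda : ∀ N, norm (a N) < d (N + 1)) (N : ℕ) : a N * b (N + 1) ≠ 1 := by
  intro hab
  have hb₁ : b (N + 1) = (a N)⁻¹ := eq_inv_of_mul_eq_one_right hab
  have hab₁ : a (N + 1) * b (N + 2) ≠ 1 := by
    intro h
    rw [hb (N + 1), h, one_pow, eq_comm, inv_eq_one] at hb₁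
    exact ha N hb₁
  have := le_norm_pow hab₁ (d (N + 1))
  rw [← hb (N + 1), hb₁, norm_inv_eq] at this
  exact absurd (hda N) (not_lt.2 this)

theorem not_forall_eq_mul_pow (ha : ∀ N, a N ≠ 1)
    (hd : ∀ N, N + ∑ i ∈ Finset.range N, norm (a i) < d N) :
    ¬ ∀ N, b N = (a N * b (N + 1)) ^ d N := by
  intro hb
  have hd₀ : ∀ N, d N ≠ 0 := fun N => (Nat.zero_lt_of_lt (hd N)).ne'
  have hda : ∀ N, norm (a N) < d (N + 1) := fun N => by
    have := hd (N + 1)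
    rw [Finset.sum_range_succ] at this
    omega
  set N := norm (b 0)
  have hlow := le_norm_pow (mul_ne_one_of_eq_mul_pow hb ha hda N) (d N)
  rw [← hb N] at hlow
  have := norm_le_add_sum_of_eq_mul_pow hb hd₀ N
  have := hd N
  omega

end FreeGroup

section NestedPow

variable {G H : Type*} [Monoid G] [Monoid H]

/-- The `k`-fold truncation of `(x N * (x (N + 1) * ⋯) ^ d (N + 1)) ^ d N`. -/
def nestedPow (x : ℕ → G) (d : ℕ → ℕ) : ℕ → ℕ → G
  | 0, _ => 1
  | k + 1, N => (x N * nestedPow x d k (N + 1)) ^ d N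

theorem map_nestedPow (f : G →* H) (x : ℕ → G) (d : ℕ → ℕ) (k N : ℕ) :
    f (nestedPow x d k N) = nestedPow (f ∘ x) d k N := by
  induction k generalizing N with
  | zero => exact map_one f
  | succ k ih => simp only [nestedPow, map_pow, map_mul, ih, Function.comp_apply]

variable {x : ℕ → G} {d : ℕ → ℕ} {m : ℕ}

theorem nestedPow_eq_one (hx : ∀ i, m ≤ i → x i = 1) {N : ℕ} (hN : m ≤ N) (k : ℕ) :
    nestedPow x d k N = 1 := by
  induction k generalizing N with
  | zero => rfl
  | succ k ih => rw [nestedPow, hx N hN, ih (by omega), one_mul, one_pow]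

theorem nestedPow_eq_of_le (hx : ∀ i, m ≤ i → x i = 1) {k k' N : ℕ} (hk : m ≤ N + k)
    (hk' : m ≤ N + k') : nestedPow x d k N = nestedPow x d k' N := by
  induction k generalizing k' N with
  | zero => rw [nestedPow_eq_one hx (by omega), nestedPow_eq_one hx (by omega)]
  | succ k ih =>
    by_cases hN : m ≤ N
    · rw [nestedPow_eq_one hx hN, nestedPow_eq_one hx hN]
    · obtain ⟨k', rfl⟩ : ∃ j, k' = j + 1 := Nat.exists_eq_add_one_of_ne_zero (by omega)
      rw [nestedPow, nestedPow, ih (k' := k') (by omega) (by omega)]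

end NestedPow

theorem zbond_zProj {m n : ℕ} (h : m ≤ n) (x : ZLim) : zbond h (zProj n x) = zProj m x :=
  x.2 h

theorem zProj_eq_one_of_le {x : ZLim} {n : ℕ} (hx : zProj n x = 1) {m : ℕ} (h : m ≤ n) :
    zProj m x = 1 := by
  rw [← zbond_zProj h, hx, map_one]

theorem ZLim.ext_zProj {x y : ZLim} (h : ∀ m, zProj m x = zProj m y) : x = y :=
  Subtype.ext (funext h)

section NestedPowLim

variable (g : ℕ → ZLim) (hg : ∀ N, zProj N (g N) = 1) (d : ℕ → ℕ)

/-- The infinite nested product `(g N * (g (N + 1) * ⋯) ^ d (N + 1)) ^ d N`. It converges because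
`g i` is trivial at levels `≤ i`, so its `m`-th coordinate is already that of the
`(m - N)`-fold truncation. -/
def nestedPowLim (N : ℕ) : ZLim :=
  ⟨fun m => zProj m (nestedPow g d (m - N) N), fun m n h => by
    dsimp only
    rw [zbond_zProj, map_nestedPow, map_nestedPow]
    exact nestedPow_eq_of_le (fun i hi => zProj_eq_one_of_le (hg i) hi) (by omega) (by omega)⟩

variable {g d}

theorem zProj_nestedPowLim {m N k : ℕ} (hk : m ≤ N + k) :
    zProj m (nestedPowLim g hg d N) = zProj m (nestedPow g d k N) := by
  change zProj m (nestedPow g d (m - N) N) = _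
  rw [map_nestedPow, map_nestedPow]
  exact nestedPow_eq_of_le (fun i hi => zProj_eq_one_of_le (hg i) hi) (by omega) hk

theorem nestedPowLim_eq (N : ℕ) :
    nestedPowLim g hg d N = (g N * nestedPowLim g hg d (N + 1)) ^ d N := by
  apply ZLim.ext_zProj
  intro m
  rw [zProj_nestedPowLim hg (k := m - N + 1) (by omega), nestedPow, map_pow, map_mul, map_pow,
    map_mul, zProj_nestedPowLim hg (k := m - N) (by omega)]

end NestedPowLim

theorem zProj_delta {m n : ℕ} (h : n < m) :
    zProj m (delta n) =
      CoprodI.of (M := fun _ : Fin m => Multiplicative ℤ) (i := ⟨n, h⟩) (Multiplicative.ofAdd 1) :=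
  dif_pos h

def zSection (m : ℕ) : CoprodI (fun _ : Fin m => Multiplicative ℤ) →* ZLim :=
  CoprodI.lift fun k => zpowersHom ZLim (delta k)

theorem zProj_comp_zSection (m : ℕ) : (zProj m).comp (zSection m) = MonoidHom.id _ := by
  refine CoprodI.ext_hom _ _ fun k => MonoidHom.ext_mint ?_
  simp [zSection, zProj_delta k.isLt]

theorem exists_eq_comp_zProj_of_ker_le {G : Type*} [Group G] (f : ZLim →* G) {m : ℕ}
    (hf : (zProj m).ker ≤ f.ker) :
    ∃ fbar : CoprodI (fun _ : Fin m => Multiplicative ℤ) →* G, f = fbar.comp (zProj m) :=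
  ⟨_, ((zProj m).liftOfRightInverse_comp _ (DFunLike.congr_fun (zProj_comp_zSection m))
    ⟨f, hf⟩).symm⟩

/-- **Higman's theorem**: every homomorphism `h : lim← *_{n<ω} ℤ_n → F` to a free group
factors through the canonical projection `p_m` to a finite free product `*_{n<m} ℤ_n`. -/
theorem higman {α : Type*} (h : ZLim →* FreeGroup α) :
    ∃ (m : ℕ) (hbar : CoprodI (fun _ : Fin m => Multiplicative ℤ) →* FreeGroup α),
      h = hbar.comp (zProj m) := by
  suffices hker : ∃ m, (zProj m).ker ≤ h.ker by
    obtain ⟨m, hm⟩ := hker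
    exact ⟨m, exists_eq_comp_zProj_of_ker_le h hm⟩
  by_contra! hcon
  choose g hg hgh using fun N => SetLike.not_le_iff_exists.1 (hcon N)
  simp only [MonoidHom.mem_ker] at hg hgh
  let d N := N + ∑ i ∈ Finset.range N, FreeGroup.norm (h (g i)) + 1
  exact FreeGroup.not_forall_eq_mul_pow (b := fun N => h (nestedPowLim g hg d N)) hgh
    (fun N => Nat.lt_succ_self _) fun N => by rw [nestedPowLim_eq, map_pow, map_mul]

end
end

section
/- Let G_i (i ∈ I) be groups and write G = lim← *_{i∈I} G_i. Suppose I = ⋃_{n<ω} I_n with I_n ⊆ I_{n+1}, and suppose x_n ∈ G satisfy p_{I_n}(x_n) = e for each n < ω. Then there exists a group homomorphism φ : lim← *_{n<ω} ℤ_n → G such that φ(δ_n) = x_n for each n < ω, where δ_n denotes the image in the inverse limit of the generator of the n-th copy ℤ_n of ℤ. -/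
/-!
Send the `k`-th generator of `*_{k<m} ℤ_k` to the `X`-th coordinate of `x_k`. For a finite
`X ⊆ I`, pick `m` with `X ⊆ I_m`; since `x_k` vanishes on `I_k ⊇ I_m` for `k ≥ m`, the value
of this assignment on the `m`-th coordinate of `z ∈ lim← *_{n<ω} ℤ_n` does not depend on the
choice of `m`. These values are compatible under the bonding maps and so define `φ(z)`.
-/

open Monoid

noncomputable section
open scoped Classical

variable (I : Type*) (G : I → Type*) [∀ i, Group (G i)]

/-- The canonical bonding homomorphism `p_{XY} : *_{i∈Y} G_i → *_{i∈X} G_i` for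
finite subsets `X ⊆ Y` of `I`: identity on each `G_i` with `i ∈ X`, trivial otherwise. -/
def bond {I : Type*} {G : I → Type*} [∀ i, Group (G i)] {X Y : Finset I} (_ : X ⊆ Y) :
    CoprodI (fun i : Y => G i) →* CoprodI (fun i : X => G i) :=
  CoprodI.lift fun i =>
    if h : (i : I) ∈ X then (CoprodI.of (M := fun j : X => G j) (i := ⟨(i : I), h⟩)) else 1

/-- The canonical inclusion `*_{i∈X} G_i → *_{i∈Y} G_i` for finite `X ⊆ Y`. -/
def incl {I : Type*} {G : I → Type*} [∀ i, Group (G i)] {X Y : Finset I} (h : X ⊆ Y) :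
    CoprodI (fun i : X => G i) →* CoprodI (fun i : Y => G i) :=
  CoprodI.lift fun i => (CoprodI.of (M := fun j : Y => G j) (i := ⟨(i : I), h i.2⟩))

lemma bond_incl {I : Type*} {G : I → Type*} [∀ i, Group (G i)] (S : Set I)
    {X Y : Finset I} (h : X ⊆ Y)
    (z : CoprodI (fun i : (Y.filter (· ∈ S)) => G i)) :
    bond h (incl (Finset.filter_subset _ Y) z)
      = incl (Finset.filter_subset (· ∈ S) X)
          (bond (Finset.filter_subset_filter _ h) z) := by
  have : (bond h).comp (incl (Finset.filter_subset (· ∈ S) Y))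
      = (incl (Finset.filter_subset (· ∈ S) X)).comp
          (bond (G := G) (Finset.filter_subset_filter (· ∈ S) h)) := by
    apply CoprodI.ext_hom
    intro i
    ext g
    obtain ⟨i, hi⟩ := i
    have hiS : i ∈ S := (Finset.mem_filter.1 hi).2
    have hiY : i ∈ Y := (Finset.mem_filter.1 hi).1
    simp only [MonoidHom.comp_apply, incl, bond, CoprodI.lift_of]
    by_cases hx : i ∈ X
    · rw [dif_pos hx, dif_pos (Finset.mem_filter.2 ⟨hx, hiS⟩), CoprodI.lift_of]
    · rw [dif_neg hx, dif_neg (fun hc => hx (Finset.mem_filter.1 hc).1),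
        MonoidHom.one_apply, MonoidHom.one_apply, map_one]
  exact DFunLike.congr_fun this z

/-- The unrestricted free product `lim← *_{i∈I} G_i`: the inverse limit of the free
products of finite subfamilies, realized as the subgroup of the product consisting of
families compatible under the bonding maps. -/
def UFP : Subgroup (Π X : Finset I, CoprodI (fun i : X => G i)) where
  carrier := {x | ∀ ⦃X Y : Finset I⦄ (h : X ⊆ Y), bond h (x Y) = x X}
  one_mem' := by intro X Y h; simp
  mul_mem' := by intro a b ha hb X Y h; simp only [Pi.mul_apply, map_mul, ha h, hb h]
  inv_mem' := by intro a ha X Y h; simp only [Pi.inv_apply, map_inv, ha h]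

/-- The canonical projection `p_S : lim← *_{i∈I} G_i → lim← *_{i∈I} G_i` for `S ⊆ I`,
defined by `p_S(x)(X) = x(X ∩ S)` (included into `*_{i∈X} G_i`). -/
def pProj (S : Set I) : UFP I G →* UFP I G where
  toFun x := ⟨fun X => incl (Finset.filter_subset (· ∈ S) X) (x.1 (X.filter (· ∈ S))),
    by
      intro X Y h
      rw [bond_incl S h, x.2 (Finset.filter_subset_filter _ h)]⟩
  map_one' := by ext X; simp
  map_mul' a b := by ext X; simp

/-- The canonical projection of the inverse limit to its `X₀`-th coordinate. -/
def finProj (X₀ : Finset I) : UFP I G →* CoprodI (fun i : X₀ => G i) :=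
  (Pi.evalMonoidHom _ X₀).comp (UFP I G).subtype

/-- `supp(h) = { X ⊆ I : p_X(g) = e → h(g) = e for all g }`. -/
def supp {F : Type*} [Group F] (h : UFP I G →* F) : Set (Set I) :=
  {X | ∀ g : UFP I G, pProj I G X g = 1 → h g = 1}

/-- An ultrafilter is countably complete if it is closed under countable intersections. -/
def CountablyComplete {I : Type*} (u : Ultrafilter I) : Prop :=
  ∀ s : ℕ → Set I, (∀ n, s n ∈ u) → (⋂ n, s n) ∈ u


section UFP

variable {I G}

theorem bond_incl_self {X Y : Finset I} (h : X ⊆ Y) (z : CoprodI (fun i : X => G i)) :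
    bond h (incl h z) = z := by
  suffices (bond h).comp (incl (G := G) h) = MonoidHom.id _ from DFunLike.congr_fun this z
  refine CoprodI.ext_hom _ _ fun i => MonoidHom.ext fun g => ?_
  simp only [MonoidHom.comp_apply, incl, bond, CoprodI.lift_of, MonoidHom.id_apply,
    dif_pos i.2]

theorem UFP.coord_eq_one_of_pProj_eq_one {S : Set I} {g : UFP I G} (hg : pProj I G S g = 1)
    {X : Finset I} (hX : (X : Set I) ⊆ S) : g.1 X = 1 := by
  have hincl : incl (Finset.filter_subset (· ∈ S) X) (g.1 (X.filter (· ∈ S))) = 1 :=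
    congrFun (congrArg Subtype.val hg) X
  have hfilter : g.1 (X.filter (· ∈ S)) = 1 := by
    simpa only [bond_incl_self, map_one] using
      congrArg (bond (Finset.filter_subset (· ∈ S) X)) hincl
  rwa [Finset.filter_true_of_mem fun i hi => hX hi] at hfilter

def UFP.lift {H : Type*} [Group H] (f : ∀ X : Finset I, H →* CoprodI (fun i : X => G i))
    (hf : ∀ ⦃X Y : Finset I⦄ (h : X ⊆ Y), (bond h).comp (f Y) = f X) : H →* UFP I G :=
  (MonoidHom.pi f).codRestrict (UFP I G) fun a _ _ h => DFunLike.congr_fun (hf h) a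

@[simp]
theorem UFP.lift_apply_coe {H : Type*} [Group H]
    (f : ∀ X : Finset I, H →* CoprodI (fun i : X => G i))
    (hf : ∀ ⦃X Y : Finset I⦄ (h : X ⊆ Y), (bond h).comp (f Y) = f X)
    (a : H) (X : Finset I) :
    (UFP.lift f hf a).1 X = f X a :=
  rfl

end UFP

section FreeZHom

variable {K : Type*} [Group K]

def freeZHom (a : ℕ → K) (m : ℕ) : CoprodI (fun _ : Fin m => Multiplicative ℤ) →* K :=
  CoprodI.lift fun k => zpowersHom K (a k)

theorem MonoidHom.comp_freeZHom {L : Type*} [Group L] (f : K →* L) (a : ℕ → K) (m : ℕ) :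
    f.comp (freeZHom a m) = freeZHom (f ∘ a) m := by
  refine CoprodI.ext_hom _ _ fun k => MonoidHom.ext fun n => ?_
  simp [freeZHom]

theorem freeZHom_comp_zbond {a : ℕ → K} {m m' : ℕ} (ha : ∀ k, m ≤ k → a k = 1)
    (h : m ≤ m') :
    (freeZHom a m).comp (zbond h) = freeZHom a m' := by
  refine CoprodI.ext_hom _ _ fun k => MonoidHom.ext fun n => ?_
  by_cases hk : (k : ℕ) < m
  · simp [freeZHom, zbond, hk]
  · simp [freeZHom, zbond, hk, ha k (not_lt.1 hk)]

theorem freeZHom_zProj_eq_of_le {a : ℕ → K} {m m' : ℕ} (ha : ∀ k, m ≤ k → a k = 1)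
    (h : m ≤ m') (z : ZLim) : freeZHom a m (zProj m z) = freeZHom a m' (zProj m' z) := by
  rw [← freeZHom_comp_zbond ha h, MonoidHom.comp_apply]
  exact congrArg _ (z.2 h).symm

theorem freeZHom_zProj_delta (a : ℕ → K) {n m : ℕ} (h : n < m) :
    freeZHom a m (zProj m (delta n)) = a n := by
  simp [zProj, delta, freeZHom, h]

end FreeZHom

/-- **Lemma 2**: if `I = ⋃_{n<ω} I_n` with `I_n ⊆ I_{n+1}` and `x_n ∈ lim← *_{i∈I} G_i`
satisfy `p_{I_n}(x_n) = e`, then there is a homomorphism `φ : lim← *_{n<ω} ℤ_n →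
lim← *_{i∈I} G_i` with `φ(δ_n) = x_n` for each `n`. -/
theorem joint_homomorphism {I : Type*} (G : I → Type*) [∀ i, Group (G i)]
    (Iseq : ℕ → Set I) (hmono : ∀ n, Iseq n ⊆ Iseq (n + 1))
    (hcover : (⋃ n, Iseq n) = Set.univ)
    (x : ℕ → UFP I G) (hx : ∀ n, pProj I G (Iseq n) (x n) = 1) :
    ∃ φ : ZLim →* UFP I G, ∀ n, φ (delta n) = x n := by
  have hIseq : Monotone Iseq := monotone_nat_of_le_succ hmono
  have hfin (X : Finset I) : ∃ n, (X : Set I) ⊆ Iseq n :=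
    hIseq.directed_le.exists_mem_subset_of_finset_subset_biUnion (by simp [hcover])
  -- the least index, so that `N` is monotone in `X`
  let N (X : Finset I) : ℕ := Nat.find (hfin X)
  have hN (X : Finset I) : (X : Set I) ⊆ Iseq (N X) := Nat.find_spec (hfin X)
  let a (X : Finset I) (k : ℕ) := (x k).1 X
  have ha {X : Finset I} {m : ℕ} (hX : (X : Set I) ⊆ Iseq m) (k : ℕ) (hk : m ≤ k) :
      a X k = 1 :=
    UFP.coord_eq_one_of_pProj_eq_one (hx k) (hX.trans (hIseq hk))
  refine ⟨UFP.lift (fun X => (freeZHom (a X) (N X)).comp (zProj (N X))) fun X Y h => ?_,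
    fun n => Subtype.ext <| funext fun X => ?_⟩
  · have hNXY : N X ≤ N Y := Nat.find_mono fun _ hY => (Finset.coe_subset.2 h).trans hY
    have hbond : bond h ∘ a Y = a X := funext fun k => (x k).2 h
    ext z : 1
    rw [← MonoidHom.comp_assoc, MonoidHom.comp_freeZHom, hbond]
    exact (freeZHom_zProj_eq_of_le (ha (hN X)) hNXY z).symm
  · have hn : n < max (N X) (n + 1) := by omega
    simp only [UFP.lift_apply_coe, MonoidHom.comp_apply]
    rw [freeZHom_zProj_eq_of_le (ha (hN X)) (le_max_left _ (n + 1)), freeZHom_zProj_delta _ hn]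
end
end

section
/- Let G_i (i ∈ I) be groups, F a free group, and h : lim← *_{i∈I} G_i → F a non-trivial homomorphism. If A_0 ⊆ I satisfies A_0 ∉ supp(h), then there exists A ⊆ I such that (1) A_0 ⊆ A and A ∉ supp(h), and (2) for every X ⊆ I, if A ∪ X ∉ supp(h) then (I \ X) ∪ A ∈ supp(h). -/
open Monoid

noncomputable section
open scoped Classical

variable (I : Type*) (G : I → Type*) [∀ i, Group (G i)]

/-! ### Auxiliary material for the proof of Lemma 4 -/

section FGAuxSec

namespace FGAux

variable {α : Type*}

/-- The non-cancellation relation between adjacent letters. -/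
def NC (a b : α × Bool) : Prop := ¬(a.1 = b.1 ∧ a.2 = !b.2)

/-- A word is reduced if no two adjacent letters cancel. -/
def Reduced (L : List (α × Bool)) : Prop := List.Chain' NC L

theorem reduce_eq_self_of_reduced [DecidableEq α] :
    ∀ {L : List (α × Bool)}, Reduced L → FreeGroup.reduce L = L
  | [], _ => rfl
  | a :: L, hL => by
    have hL' : Reduced L := hL.tail
    have ih := reduce_eq_self_of_reduced hL'
    rw [FreeGroup.reduce.cons, ih]
    cases L with
    | nil => rfl
    | cons b L' =>
      have hab : NC a b := (List.isChain_cons_cons.1 hL).1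
      simp only [NC] at hab
      dsimp only
      rw [if_neg hab]

theorem reduced_of_reduce_eq_self [DecidableEq α] :
    ∀ {L : List (α × Bool)}, FreeGroup.reduce L = L → Reduced L
  | [], _ => List.isChain_nil
  | a :: L, hL => by
    have hL' := hL
    rw [FreeGroup.reduce.cons] at hL'
    cases hr : FreeGroup.reduce L with
    | nil =>
      rw [hr] at hL'
      dsimp only at hL'
      have : L = [] := by simpa using congrArg List.tail hL'.symm
      subst this
      exact List.isChain_singleton a
    | cons b L' =>
      have hred : (FreeGroup.reduce L).length ≤ L.length :=
        FreeGroup.Red.length_le FreeGroup.reduce.red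
      rw [hr] at hL' hred
      dsimp only at hL'
      by_cases hc : a.1 = b.1 ∧ a.2 = !b.2
      · rw [if_pos hc] at hL'
        exfalso
        have : L'.length = L.length + 1 := by rw [hL']; simp
        simp at hred
        omega
      · rw [if_neg hc] at hL'
        have hLL : L = b :: L' := by simpa using congrArg List.tail hL'.symm
        have hrL : Reduced L := reduced_of_reduce_eq_self (by rw [hLL] at hr ⊢; exact hr)
        rw [hLL] at hrL ⊢
        exact List.isChain_cons_cons.2 ⟨hc, hrL⟩

theorem reduced_toWord [DecidableEq α] (x : FreeGroup α) : Reduced x.toWord :=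
  reduced_of_reduce_eq_self (FreeGroup.reduce_toWord x)

theorem invRev_append' (L₁ L₂ : List (α × Bool)) :
    FreeGroup.invRev (L₁ ++ L₂) = FreeGroup.invRev L₂ ++ FreeGroup.invRev L₁ := by
  simp [FreeGroup.invRev]

theorem invRev_singleton (p : α × Bool) :
    FreeGroup.invRev [p] = [(p.1, !p.2)] := by
  simp [FreeGroup.invRev]

theorem invRev_cons (p : α × Bool) (L : List (α × Bool)) :
    FreeGroup.invRev (p :: L) = FreeGroup.invRev L ++ [(p.1, !p.2)] := by
  simpa [invRev_singleton] using invRev_append' [p] L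

/-- Structure of the reduction of a concatenation of two reduced words:
a suffix of the first cancels against the inverse prefix of the second. -/
theorem reduce_append [DecidableEq α] :
    ∀ (u : List (α × Bool)), Reduced u → ∀ (v : List (α × Bool)), Reduced v →
      ∃ w s t, u = w ++ s ∧ v = FreeGroup.invRev s ++ t ∧
        FreeGroup.reduce (u ++ v) = w ++ t := by
  intro u
  induction u using List.reverseRecOn with
  | nil =>
    intro _ v hv
    exact ⟨[], [], v, rfl, rfl, by simpa using reduce_eq_self_of_reduced hv⟩
  | append_singleton u₀ p ih =>
    intro hu v hv
    have hu₀ : Reduced u₀ := (List.isChain_append.1 hu).1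
    cases v with
    | nil =>
      refine ⟨u₀ ++ [p], [], [], by simp, rfl, ?_⟩
      simp only [List.append_nil]
      exact reduce_eq_self_of_reduced hu
    | cons q v₀ =>
      have hv₀ : Reduced v₀ := hv.tail
      by_cases hc : p.1 = q.1 ∧ p.2 = !q.2
      · -- cancellation at the junction
        have hq : q = (p.1, !p.2) := by
          obtain ⟨h1, h2⟩ := hc
          apply Prod.ext
          · exact h1.symm
          · rw [h2, Bool.not_not]
        obtain ⟨w, s, t, h1, h2, h3⟩ := ih hu₀ v₀ hv₀
        refine ⟨w, s ++ [p], t, by rw [h1, List.append_assoc], ?_, ?_⟩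
        · rw [invRev_append', invRev_singleton, h2, hq]
          simp
        · have hstep : FreeGroup.Red.Step (u₀ ++ [p] ++ q :: v₀) (u₀ ++ v₀) := by
            rw [List.append_assoc, hq]
            exact FreeGroup.Red.Step.not
          rw [FreeGroup.reduce.Step.eq hstep, h3]
      · -- no cancellation at the junction
        have hred : Reduced (u₀ ++ [p] ++ q :: v₀) := by
          rw [List.append_assoc]
          refine List.isChain_append.2 ⟨hu₀, ?_, ?_⟩
          · refine List.isChain_append.2 ⟨List.isChain_singleton p, hv, ?_⟩
            intro x hx y hy
            simp at hx hy
            subst hx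
            cases v₀ <;> simp_all [NC]
          · intro x hx y hy
            rcases List.eq_nil_or_concat' u₀ with rfl | ⟨u₁, r, rfl⟩
            · simp at hx
            · simp at hx hy
              subst hx; subst hy
              exact (List.isChain_append.1 hu).2.2 r (by simp) p (by simp)
        refine ⟨u₀ ++ [p], [], q :: v₀, by simp, rfl, ?_⟩
        rw [List.append_assoc] at hred ⊢
        rw [reduce_eq_self_of_reduced hred]

theorem no_antipalindrome_aux :
    ∀ (n : ℕ) (r : List (α × Bool)), r.length ≤ n → Reduced r → r ≠ [] →
      FreeGroup.invRev r ≠ r := by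
  intro n
  induction n with
  | zero => intro r hr _ hne _; exact hne (List.length_eq_zero_iff.1 (Nat.le_zero.1 hr))
  | succ n ih =>
    intro r hlen hred hne hpal
    cases r with
    | nil => exact hne rfl
    | cons d r₁ =>
      rcases List.eq_nil_or_concat' r₁ with rfl | ⟨mid, e, rfl⟩
      · rw [invRev_singleton] at hpal
        rw [List.cons_eq_cons] at hpal
        have h2 : (!d.2) = d.2 := congrArg Prod.snd hpal.1
        simp at h2
      · -- r = d :: mid ++ [e]
        rw [invRev_cons, invRev_append', invRev_singleton] at hpal
        have hlenmid : (FreeGroup.invRev mid).length = mid.length := FreeGroup.invRev_length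
        have hpal' : (e.1, !e.2) :: (FreeGroup.invRev mid ++ [(d.1, !d.2)])
            = d :: (mid ++ [e]) := by
          simpa using hpal
        rw [List.cons_eq_cons] at hpal'
        have hinj := List.append_inj hpal'.2 (by simpa using hlenmid)
        have hmid : FreeGroup.invRev mid = mid := hinj.1
        cases mid with
        | nil =>
          have he : (d.1, !d.2) = e := by
            have h := hinj.2
            rw [List.cons_eq_cons] at h
            exact h.1
          have hNC : NC d e := by
            have : Reduced [d, e] := by simpa using hred
            exact (List.isChain_cons_cons.1 this).1
          exact hNC ⟨by rw [← he], by rw [← he]; simp⟩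
        | cons m₀ mid₀ =>
          have hmred : Reduced (m₀ :: mid₀) := by
            have h1 : Reduced ((m₀ :: mid₀) ++ [e]) := hred.tail
            exact (List.isChain_append.1 h1).1
          refine ih (m₀ :: mid₀) ?_ hmred (by simp) hmid
          simp at hlen ⊢
          omega

theorem no_antipalindrome (r : List (α × Bool)) (hred : Reduced r) (hne : r ≠ []) :
    FreeGroup.invRev r ≠ r :=
  no_antipalindrome_aux r.length r le_rfl hred hne

theorem norm_add_one_le_norm_sq [DecidableEq α] (x : FreeGroup α) (hx : x ≠ 1) :
    FreeGroup.norm x + 1 ≤ FreeGroup.norm (x * x) := by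
  have hru : Reduced x.toWord := reduced_toWord x
  obtain ⟨w, s, t, h1, h2, h3⟩ := reduce_append x.toWord hru x.toWord hru
  have htw : (x * x).toWord = w ++ t := by
    have hxx : x * x = FreeGroup.mk (x.toWord ++ x.toWord) := by
      rw [← FreeGroup.mul_mk, FreeGroup.mk_toWord]
    rw [hxx, FreeGroup.toWord_mk, h3]
  have hnormx : FreeGroup.norm x = x.toWord.length := rfl
  have hnormxx : FreeGroup.norm (x * x) = w.length + t.length := by
    rw [FreeGroup.norm, htw, List.length_append]
  have hl1 : x.toWord.length = w.length + s.length := by rw [h1, List.length_append]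
  have hl2 : x.toWord.length = s.length + t.length := by
    rw [h2, List.length_append, FreeGroup.invRev_length]
  by_contra hcon
  push_neg at hcon
  have hwt : w.length = t.length := by omega
  have hws : w.length ≤ s.length := by omega
  have hw_pre : w <+: x.toWord := ⟨s, h1.symm⟩
  have hs_pre : FreeGroup.invRev s <+: x.toWord := ⟨t, h2.symm⟩
  have hw_pre_s : w <+: FreeGroup.invRev s :=
    List.prefix_of_prefix_length_le hw_pre hs_pre
      (by rw [FreeGroup.invRev_length]; exact hws)
  obtain ⟨r, hr⟩ := hw_pre_s
  have hst : s = r ++ t := by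
    apply List.append_cancel_left (as := w)
    rw [← h1, ← List.append_assoc, hr, ← h2]
  have hinv : FreeGroup.invRev t ++ FreeGroup.invRev r = w ++ r := by
    rw [← invRev_append', ← hst, hr]
  have hinj := List.append_inj hinv
    (by rw [FreeGroup.invRev_length]; omega)
  have hrr : FreeGroup.invRev r = r := hinj.2
  rcases List.eq_nil_or_concat' r with rfl | ⟨r₀, d, hrne⟩
  · have hw : FreeGroup.invRev s = w := (by simpa using hr : w = FreeGroup.invRev s).symm
    cases s with
    | nil =>
      have ht0 : t = [] := by simpa using hst.symm
      have hnil : x.toWord = [] := by rw [h2, ht0]; simp [FreeGroup.invRev]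
      exact hx (FreeGroup.toWord_eq_nil_iff.1 hnil)
    | cons c s' =>
      have htt : t = c :: s' := (by simpa using hst : c :: s' = t).symm
      have hu : x.toWord = FreeGroup.invRev s' ++ ((c.1, !c.2) :: c :: s') := by
        rw [h2, htt, invRev_cons]
        simp
      have hch : Reduced (FreeGroup.invRev s' ++ ((c.1, !c.2) :: c :: s')) := by
        rw [← hu]; exact hru
      have := (List.isChain_append.1 hch).2.1
      exact (List.isChain_cons_cons.1 this).1 ⟨rfl, rfl⟩
  · have hsred : Reduced s := by
      have : Reduced (w ++ s) := by rw [← h1]; exact hru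
      exact (List.isChain_append.1 this).2.1
    have hrred : Reduced r := by
      rw [hst] at hsred
      exact (List.isChain_append.1 hsred).1
    exact no_antipalindrome r hrred (by rw [hrne]; simp) hrr

theorem pow_two_pow_facts [DecidableEq α] (x : FreeGroup α) (hx : x ≠ 1) (k : ℕ) :
    x ^ (2 ^ k) ≠ 1 ∧ FreeGroup.norm x + k ≤ FreeGroup.norm (x ^ 2 ^ k) := by
  induction k with
  | zero => simpa using hx
  | succ k ih =>
    have h2 : x ^ 2 ^ (k + 1) = x ^ 2 ^ k * x ^ 2 ^ k := by
      rw [← pow_add]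
      congr 1
      rw [pow_succ]
      omega
    have hsq := norm_add_one_le_norm_sq _ ih.1
    have hpos : 1 ≤ FreeGroup.norm (x ^ 2 ^ k) := by
      rcases Nat.eq_zero_or_pos (FreeGroup.norm (x ^ 2 ^ k)) with hz | hp
      · exact absurd (FreeGroup.norm_eq_zero.1 hz) ih.1
      · exact hp
    constructor
    · intro hone
      rw [h2] at hone
      have := FreeGroup.norm_eq_zero.2 hone
      omega
    · rw [h2]
      omega

theorem norm_le_norm_pow_two_pow [DecidableEq α] (x : FreeGroup α) (k : ℕ) :
    FreeGroup.norm x ≤ FreeGroup.norm (x ^ 2 ^ k) := by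
  by_cases hx : x = 1
  · subst hx; simp
  · exact le_trans (Nat.le_add_right _ k) (pow_two_pow_facts x hx k).2

/-- The key impossibility: in a free group there is no sequence `β` with
`β n = a n * β (n+1) ^ (2 ^ (n + 1 + Σ_{j ≤ n} ‖a j‖))` where all `a n ≠ 1`. -/
theorem no_nested_sequence [DecidableEq α] (a β : ℕ → FreeGroup α) (ha : ∀ n, a n ≠ 1)
    (hrec : ∀ n, β n = a n *
      β (n + 1) ^ 2 ^ (n + 1 + ∑ j ∈ Finset.range (n + 1), FreeGroup.norm (a j))) :
    False := by
  set s : ℕ → ℕ := fun n => ∑ j ∈ Finset.range n, FreeGroup.norm (a j) with hs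
  have hsa : ∀ n, FreeGroup.norm (a n) ≤ s (n + 1) := by
    intro n
    exact Finset.single_le_sum (f := fun j => FreeGroup.norm (a j))
      (fun _ _ => Nat.zero_le _) (Finset.self_mem_range_succ n)
  have hssucc : ∀ n, s (n + 1) = s n + FreeGroup.norm (a n) := by
    intro n; exact Finset.sum_range_succ _ n
  have hpow : ∀ n, β (n + 1) ^ 2 ^ (n + 1 + s (n + 1)) = (a n)⁻¹ * β n := by
    intro n
    rw [hrec n]
    group
    rfl
  have hβ : ∀ n, β n ≠ 1 := by
    intro n hone
    have h1 : β (n + 1) ^ 2 ^ (n + 1 + s (n + 1)) = (a n)⁻¹ := by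
      rw [hpow n, hone, mul_one]
    have hβ1 : β (n + 1) ≠ 1 := by
      intro hz
      rw [hz, one_pow] at h1
      exact ha n (by rw [← inv_inv (a n), ← h1, inv_one])
    have hfacts := pow_two_pow_facts (β (n + 1)) hβ1 (n + 1 + s (n + 1))
    have hg : FreeGroup.norm (β (n + 1)) + (n + 1 + s (n + 1))
        ≤ FreeGroup.norm (a n) := by
      calc FreeGroup.norm (β (n + 1)) + (n + 1 + s (n + 1))
          ≤ FreeGroup.norm (β (n + 1) ^ 2 ^ (n + 1 + s (n + 1))) := hfacts.2
        _ = FreeGroup.norm ((a n)⁻¹) := by rw [h1]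
        _ = FreeGroup.norm (a n) := FreeGroup.norm_inv_eq
    have hb1 : 1 ≤ FreeGroup.norm (β (n + 1)) := by
      rcases Nat.eq_zero_or_pos (FreeGroup.norm (β (n + 1))) with hz | hp
      · exact absurd (FreeGroup.norm_eq_zero.1 hz) hβ1
      · exact hp
    have := hsa n
    omega
  have hgrow : ∀ n, FreeGroup.norm (β n) ≤ FreeGroup.norm (β 0) + s n := by
    intro n
    induction n with
    | zero => simp [hs]
    | succ n ih =>
      have h1 : FreeGroup.norm (β (n + 1))
          ≤ FreeGroup.norm (β (n + 1) ^ 2 ^ (n + 1 + s (n + 1))) :=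
        norm_le_norm_pow_two_pow _ _
      have h2 : FreeGroup.norm (β (n + 1) ^ 2 ^ (n + 1 + s (n + 1)))
          ≤ FreeGroup.norm (a n) + FreeGroup.norm (β n) := by
        rw [hpow n]
        calc FreeGroup.norm ((a n)⁻¹ * β n)
            ≤ FreeGroup.norm ((a n)⁻¹) + FreeGroup.norm (β n) := FreeGroup.norm_mul_le _ _
          _ = FreeGroup.norm (a n) + FreeGroup.norm (β n) := by rw [FreeGroup.norm_inv_eq]
      have := hssucc n
      omega
  have hkey : ∀ n, n + 2 ≤ FreeGroup.norm (β 0) := by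
    intro n
    have hfacts := pow_two_pow_facts (β (n + 1)) (hβ (n + 1)) (n + 1 + s (n + 1))
    have hb1 : 1 ≤ FreeGroup.norm (β (n + 1)) := by
      rcases Nat.eq_zero_or_pos (FreeGroup.norm (β (n + 1))) with hz | hp
      · exact absurd (FreeGroup.norm_eq_zero.1 hz) (hβ (n + 1))
      · exact hp
    have h2 : FreeGroup.norm (β (n + 1) ^ 2 ^ (n + 1 + s (n + 1)))
        ≤ FreeGroup.norm (a n) + FreeGroup.norm (β n) := by
      rw [hpow n]
      calc FreeGroup.norm ((a n)⁻¹ * β n)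
          ≤ FreeGroup.norm ((a n)⁻¹) + FreeGroup.norm (β n) := FreeGroup.norm_mul_le _ _
        _ = FreeGroup.norm (a n) + FreeGroup.norm (β n) := by rw [FreeGroup.norm_inv_eq]
    have h3 := hfacts.2
    have h4 := hgrow n
    have h5 := hssucc n
    omega
  have := hkey (FreeGroup.norm (β 0))
  omega

end FGAux

namespace UFPAux

variable {ι : Type*} {Γ : ι → Type*} [∀ i, Group (Γ i)]

lemma bond_incl_id {X Y : Finset ι} (hs : X ⊆ Y) (z : CoprodI (fun i : X => Γ i)) :
    bond hs (incl hs z) = z := by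
  have : (bond (G := Γ) hs).comp (incl hs) = MonoidHom.id _ := by
    apply CoprodI.ext_hom
    intro i
    ext g
    simp only [MonoidHom.comp_apply, MonoidHom.id_apply, incl, bond, CoprodI.lift_of]
    rw [dif_pos i.2]
  exact DFunLike.congr_fun this z

lemma coord_eq_one_of_pProj {S : Set ι} {g : UFP ι Γ}
    (hg : pProj ι Γ S g = 1) {Y : Finset ι} (hY : ↑Y ⊆ S) :
    (g : Π X : Finset ι, CoprodI (fun i : X => Γ i)) Y = 1 := by
  have h1 : incl (Finset.filter_subset (· ∈ S) Y)
      ((g : Π X : Finset ι, CoprodI (fun i : X => Γ i)) (Y.filter (· ∈ S))) = 1 :=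
    congrArg (fun z : UFP ι Γ => (z : Π X : Finset ι, CoprodI (fun i : X => Γ i)) Y) hg
  have h2 : (g : Π X : Finset ι, CoprodI (fun i : X => Γ i)) (Y.filter (· ∈ S)) = 1 := by
    have h3 := congrArg (bond (Finset.filter_subset (· ∈ S) Y)) h1
    rwa [bond_incl_id, map_one] at h3
  have hfe : Y.filter (· ∈ S) = Y :=
    Finset.filter_true_of_mem (fun i hi => hY hi)
  rw [hfe] at h2
  exact h2

/-- Nested product with powers: `nestAux g E Y fuel n` is
`g n * (g (n+1) * ( ... )^(E (n+2)))^(E (n+1))` cut off after `fuel` steps,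
in the coordinate `Y`. -/
def nestAux (g : ℕ → UFP ι Γ) (E : ℕ → ℕ) (Y : Finset ι) :
    ℕ → ℕ → CoprodI (fun i : Y => Γ i)
  | 0, _ => 1
  | (fuel + 1), n =>
      (g n : Π X : Finset ι, CoprodI (fun i : X => Γ i)) Y
        * (nestAux g E Y fuel (n + 1)) ^ (E (n + 1))

lemma nestAux_triv (g : ℕ → UFP ι Γ) (E : ℕ → ℕ) (Y : Finset ι) :
    ∀ (fuel n : ℕ),
      (∀ j, n ≤ j → (g j : Π X : Finset ι, CoprodI (fun i : X => Γ i)) Y = 1) →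
      nestAux g E Y fuel n = 1
  | 0, _, _ => rfl
  | (fuel + 1), n, hj => by
    rw [nestAux, hj n le_rfl,
      nestAux_triv g E Y fuel (n + 1) (fun j hjn => hj j (by omega))]
    simp

lemma nestAux_stable (g : ℕ → UFP ι Γ) (E : ℕ → ℕ) (Y : Finset ι) :
    ∀ (fuel fuel' n : ℕ), fuel ≤ fuel' →
      (∀ j, n + fuel ≤ j → (g j : Π X : Finset ι, CoprodI (fun i : X => Γ i)) Y = 1) →
      nestAux g E Y fuel n = nestAux g E Y fuel' n
  | 0, fuel', n, _, hj => by
    rw [nestAux, nestAux_triv g E Y fuel' n (fun j hjn => hj j (by omega))]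
  | (fuel + 1), (fuel' + 1), n, hle, hj => by
    rw [nestAux, nestAux,
      nestAux_stable g E Y fuel fuel' (n + 1) (by omega) (fun j hjn => hj j (by omega))]

lemma nestAux_bond (g : ℕ → UFP ι Γ) (E : ℕ → ℕ) {X Y : Finset ι} (hXY : X ⊆ Y) :
    ∀ (fuel n : ℕ),
      bond hXY (nestAux g E Y fuel n) = nestAux g E X fuel n
  | 0, _ => by rw [nestAux, nestAux, map_one]
  | (fuel + 1), n => by
    rw [nestAux, nestAux, map_mul, map_pow, (g n).2 hXY,
      nestAux_bond g E hXY fuel (n + 1)]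

end UFPAux
end FGAuxSec

/-- **Lemma 4**: if `A₀ ∉ supp(h)`, then there exists `A ⊇ A₀` with `A ∉ supp(h)` such
that for every `X ⊆ I`, `A ∪ X ∉ supp(h)` implies `(I \ X) ∪ A ∈ supp(h)`. -/
theorem exists_critical_set {I : Type*} (G : I → Type*) [∀ i, Group (G i)]
    {α : Type*} (h : UFP I G →* FreeGroup α) (hnt : h ≠ 1)
    (A₀ : Set I) (hA₀ : A₀ ∉ supp I G h) :
    ∃ A : Set I, (A₀ ⊆ A ∧ A ∉ supp I G h) ∧
      ∀ X : Set I, A ∪ X ∉ supp I G h → (Set.univ \ X) ∪ A ∈ supp I G h := by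
  by_contra hcon
  push_neg at hcon
  -- hcon : ∀ A, (A₀ ⊆ A ∧ A ∉ supp) → ∃ X, A ∪ X ∉ supp ∧ (univ \ X) ∪ A ∉ supp
  -- Build the increasing sequence of sets A n together with the splitting sets.
  let T := {A : Set I // A₀ ⊆ A ∧ A ∉ supp I G h}
  let pick : ∀ t : T, Set I := fun t => Classical.choose (hcon t.1 t.2)
  have pick_spec : ∀ t : T, t.1 ∪ pick t ∉ supp I G h ∧
      (Set.univ \ pick t) ∪ t.1 ∉ supp I G h :=
    fun t => Classical.choose_spec (hcon t.1 t.2)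
  let next : T → T := fun t =>
    ⟨t.1 ∪ pick t, t.2.1.trans Set.subset_union_left, (pick_spec t).1⟩
  let seq : ℕ → T := fun n => next^[n] ⟨A₀, subset_rfl, hA₀⟩
  have hseq : ∀ n, seq (n + 1) = next (seq n) := by
    intro n
    exact Function.iterate_succ_apply' next n _
  let A : ℕ → Set I := fun n => (seq n).1
  let Xs : ℕ → Set I := fun n => pick (seq n)
  let B : ℕ → Set I := fun n => (Set.univ \ Xs n) ∪ A n
  have hB : ∀ n, B n ∉ supp I G h := fun n => (pick_spec (seq n)).2
  have hAsucc : ∀ n, A (n + 1) = A n ∪ Xs n := by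
    intro n
    show (seq (n + 1)).1 = _
    rw [hseq n]
  have hAmono : ∀ m n, m ≤ n → A m ⊆ A n := by
    intro m n hmn
    induction n with
    | zero => rw [Nat.le_zero.1 hmn]
    | succ n ih =>
      rcases Nat.lt_or_ge m (n + 1) with hlt | hge
      · exact (ih (by omega)).trans (by rw [hAsucc n]; exact Set.subset_union_left)
      · have : m = n + 1 := by omega
        rw [this]
  have hAB : ∀ n, A n ⊆ B n := fun n => Set.subset_union_right
  have hnotB : ∀ (i : I) (n m : ℕ), n < m → i ∉ B n → i ∈ B m := by
    intro i n m hnm hiB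
    have hiX : i ∈ Xs n := by
      by_contra hiX
      exact hiB (Or.inl ⟨trivial, hiX⟩)
    have : i ∈ A (n + 1) := by rw [hAsucc n]; exact Or.inr hiX
    exact hAB m (hAmono (n + 1) m (by omega) this)
  -- choose witnesses
  have hwit : ∀ n, ∃ g : UFP I G, pProj I G (B n) g = 1 ∧ h g ≠ 1 := by
    intro n
    by_contra hno
    push_neg at hno
    exact hB n hno
  let g : ℕ → UFP I G := fun n => Classical.choose (hwit n)
  have hg1 : ∀ n, pProj I G (B n) (g n) = 1 := fun n => (Classical.choose_spec (hwit n)).1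
  have hg2 : ∀ n, h (g n) ≠ 1 := fun n => (Classical.choose_spec (hwit n)).2
  -- boundedness: every finite set is eventually inside all B n
  have hbnd : ∀ Y : Finset I, ∃ N, ∀ n, N ≤ n → ↑Y ⊆ B n := by
    intro Y
    induction Y using Finset.induction_on with
    | empty => exact ⟨0, fun n _ => by simp⟩
    | @insert i Y hiY ih =>
      obtain ⟨N, hN⟩ := ih
      by_cases hall : ∀ n, i ∈ B n
      · exact ⟨N, fun n hn => by
          rw [Finset.coe_insert, Set.insert_subset_iff]
          exact ⟨hall n, hN n hn⟩⟩
      · push_neg at hall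
        obtain ⟨n₀, hn₀⟩ := hall
        refine ⟨max N (n₀ + 1), fun n hn => ?_⟩
        rw [Finset.coe_insert, Set.insert_subset_iff]
        exact ⟨hnotB i n₀ n (by omega) hn₀, hN n (by omega)⟩
  let bnd : Finset I → ℕ := fun Y => Classical.choose (hbnd Y)
  have bnd_spec : ∀ (Y : Finset I) (n : ℕ), bnd Y ≤ n → ↑Y ⊆ B n :=
    fun Y => Classical.choose_spec (hbnd Y)
  have vanish : ∀ (n : ℕ) (Y : Finset I), bnd Y ≤ n →
      (g n : Π X : Finset I, CoprodI (fun i : X => G i)) Y = 1 := by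
    intro n Y hY
    exact UFPAux.coord_eq_one_of_pProj (hg1 n) (bnd_spec Y n hY)
  -- exponents
  let a : ℕ → FreeGroup α := fun n => h (g n)
  let E : ℕ → ℕ := fun n => 2 ^ (n + ∑ j ∈ Finset.range n, FreeGroup.norm (a j))
  -- the nested elements
  have hWmem : ∀ n : ℕ, (fun Y : Finset I => UFPAux.nestAux g E Y (bnd Y - n) n) ∈ UFP I G := by
    intro n
    intro X Y hXY
    rw [UFPAux.nestAux_bond g E hXY (bnd Y - n) n]
    have hmax : ∀ f f' : ℕ, f ≤ f' → (∀ j, n + f ≤ j → ↑X ⊆ B j) →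
        UFPAux.nestAux g E X f n = UFPAux.nestAux g E X f' n := by
      intro f f' hff hjf
      refine UFPAux.nestAux_stable g E X f f' n hff ?_
      intro j hj
      exact UFPAux.coord_eq_one_of_pProj (hg1 j) (hjf j hj)
    rcases Nat.le_total (bnd Y - n) (bnd X - n) with hc | hc
    · refine hmax _ _ hc ?_
      intro j hj
      exact (Finset.coe_subset.2 hXY).trans (bnd_spec Y j (by omega))
    · refine (hmax _ _ hc ?_).symm
      intro j hj
      exact bnd_spec X j (by omega)
  let W : ℕ → UFP I G := fun n => ⟨_, hWmem n⟩
  have hrel : ∀ n, W n = g n * (W (n + 1)) ^ (E (n + 1)) := by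
    intro n
    apply Subtype.ext
    funext Y
    have hco : ((g n * (W (n + 1)) ^ (E (n + 1)) : UFP I G) :
        Π X : Finset I, CoprodI (fun i : X => G i)) Y
        = (g n : Π X : Finset I, CoprodI (fun i : X => G i)) Y
          * ((W (n + 1) : Π X : Finset I, CoprodI (fun i : X => G i)) Y) ^ (E (n + 1)) := by
      push_cast
      simp [Pi.mul_apply, Pi.pow_apply]
    show UFPAux.nestAux g E Y (bnd Y - n) n = _
    rw [hco]
    show _ = _ * (UFPAux.nestAux g E Y (bnd Y - (n + 1)) (n + 1)) ^ (E (n + 1))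
    rcases Nat.lt_or_ge n (bnd Y) with hn | hn
    · have hfuel : bnd Y - n = (bnd Y - (n + 1)) + 1 := by omega
      rw [hfuel, UFPAux.nestAux]
    · have h0 : bnd Y - n = 0 := by omega
      have h1 : bnd Y - (n + 1) = 0 := by omega
      rw [h0, h1]
      show (1 : CoprodI (fun i : Y => G i)) = _ * (UFPAux.nestAux g E Y 0 (n + 1)) ^ (E (n + 1))
      rw [UFPAux.nestAux, vanish n Y hn]
      simp
  -- conclude via the free-group impossibility
  have hrec : ∀ n, h (W n) = a n *
      (h (W (n + 1))) ^ 2 ^ (n + 1 + ∑ j ∈ Finset.range (n + 1), FreeGroup.norm (a j)) := by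
    intro n
    rw [hrel n, map_mul, map_pow]
  exact FGAux.no_nested_sequence a (fun n => h (W n)) hg2 hrec
end
end

section
/- Let G_i (i ∈ I) be groups, F a free group, and h : lim← *_{i∈I} G_i → F a non-trivial homomorphism. Then supp(h) is a proper filter on I: I ∈ supp(h), ∅ ∉ supp(h), supp(h) is closed under supersets (if X ∈ supp(h) and X ⊆ Y ⊆ I then Y ∈ supp(h)), and supp(h) is closed under finite intersections (if X, Y ∈ supp(h) then X ∩ Y ∈ supp(h)). -/
open Monoid

noncomputable section
open scoped Classical

variable (I : Type*) (G : I → Type*) [∀ i, Group (G i)]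

section Helpers

variable {I : Type*} {G : I → Type*} [∀ i, Group (G i)]

lemma incl_incl {A B C : Finset I} (h1 : A ⊆ B) (h2 : B ⊆ C)
    (z : CoprodI (fun i : A => G i)) :
    incl h2 (incl h1 z) = incl (h1.trans h2) z := by
  have : (incl (G := G) h2).comp (incl h1) = incl (h1.trans h2) := by
    apply CoprodI.ext_hom
    intro i
    ext x
    simp [incl]
  exact DFunLike.congr_fun this z

lemma incl_refl {A : Finset I} (h : A ⊆ A) (z : CoprodI (fun i : A => G i)) :
    incl h z = z := by
  have : incl (G := G) h = MonoidHom.id _ := by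
    apply CoprodI.ext_hom
    intro i
    ext x
    obtain ⟨i, hi⟩ := i
    simp [incl]
  rw [this]; rfl

lemma eval_congr (x : UFP I G) {A B : Finset I} (e : A = B) {Z : Finset I}
    (hA : A ⊆ Z) (hB : B ⊆ Z) :
    incl hA (x.1 A) = incl hB (x.1 B) := by
  subst e; rfl

lemma pProj_apply (S : Set I) (g : UFP I G) (Z : Finset I) :
    (pProj I G S g).1 Z
      = incl (Finset.filter_subset (· ∈ S) Z) (g.1 (Z.filter (· ∈ S))) := rfl

lemma pProj_pProj (S T : Set I) (g : UFP I G) :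
    pProj I G S (pProj I G T g) = pProj I G (S ∩ T) g := by
  apply Subtype.ext
  funext Z
  rw [pProj_apply, pProj_apply, pProj_apply, incl_incl]
  exact eval_congr g (by ext a; simp [and_assoc]) _ _

lemma pProj_univ (g : UFP I G) : pProj I G Set.univ g = g := by
  apply Subtype.ext
  funext Z
  rw [pProj_apply]
  exact (eval_congr g (by ext a; simp) _ (subset_refl Z)).trans (incl_refl _ _)

lemma coprodI_empty_eq_one (z : CoprodI (fun i : ((∅ : Finset I) : Finset I) => G i)) :
    z = 1 := by
  induction z using CoprodI.induction_on with
  | one => rfl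
  | of i x => exact absurd i.2 (Finset.notMem_empty _)
  | mul x y hx hy => rw [hx, hy, one_mul]

lemma pProj_empty (g : UFP I G) : pProj I G (∅ : Set I) g = 1 := by
  apply Subtype.ext
  funext Z
  rw [pProj_apply]
  refine Eq.trans (eval_congr g ?_ _ (Finset.empty_subset Z)) ?_
  · ext a; simp
  · rw [coprodI_empty_eq_one (g.1 (∅ : Finset I)), map_one]; rfl

end Helpers

/-- Remark (3): for a non-trivial homomorphism `h`, `supp(h)` is a proper filter on `I`. -/
theorem supp_is_proper_filter {I : Type*} (G : I → Type*) [∀ i, Group (G i)]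
    {α : Type*} (h : UFP I G →* FreeGroup α) (hnt : h ≠ 1) :
    Set.univ ∈ supp I G h ∧ ∅ ∉ supp I G h ∧
      (∀ X Y : Set I, X ∈ supp I G h → X ⊆ Y → Y ∈ supp I G h) ∧
      (∀ X Y : Set I, X ∈ supp I G h → Y ∈ supp I G h → X ∩ Y ∈ supp I G h) := by
  refine ⟨?_, ?_, ?_, ?_⟩
  · intro g hg
    rw [pProj_univ] at hg
    rw [hg, map_one]
  · intro hmem
    apply hnt
    ext g
    exact hmem g (pProj_empty g)
  · intro X Y hX hXY g hg
    apply hX g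
    have : pProj I G X (pProj I G Y g) = pProj I G X g := by
      rw [pProj_pProj, Set.inter_eq_left.mpr hXY]
    rw [← this, hg, map_one]
  · intro X Y hX hY g hg
    -- h g = h (pProj Y g)
    have h1 : h (g * (pProj I G Y g)⁻¹) = 1 := by
      apply hY
      rw [map_mul, map_inv, pProj_pProj, Set.inter_self, mul_inv_cancel]
    have h2 : h (pProj I G Y g * (pProj I G X (pProj I G Y g))⁻¹) = 1 := by
      apply hX
      rw [map_mul, map_inv, pProj_pProj, pProj_pProj, ← Set.inter_assoc,
        Set.inter_self, mul_inv_cancel]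
    have h3 : pProj I G X (pProj I G Y g) = 1 := by
      rw [pProj_pProj]; exact hg
    rw [map_mul, map_inv, h3, map_one, inv_one, mul_one] at h2
    rw [map_mul, map_inv, h2, inv_one, mul_one] at h1
    exact h1

end
end

section
/- Let G_i (i ∈ I) be groups, F a free group, and h : lim← *_{i∈I} G_i → F a non-trivial homomorphism. Then there exist a finite partition I = I_0 ∪ ⋯ ∪ I_n of I into pairwise disjoint sets and countably complete ultrafilters u_0, …, u_n on I with I_k ∈ u_k for each k, such that for every choice of sets U_0 ∈ u_0, …, U_n ∈ u_n one has U_0 ∪ ⋯ ∪ U_n ∈ supp(h). -/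
open Monoid

noncomputable section
open scoped Classical

variable (I : Type*) (G : I → Type*) [∀ i, Group (G i)]

set_option linter.unusedSectionVars false

namespace UFPAux
open FreeGroup List

variable {α : Type*} [DecidableEq α]

/-- non-cancellation relation on letters -/
def NC (a b : α × Bool) : Prop := ¬(a.1 = b.1 ∧ a.2 = !b.2)

lemma nc_self (a : α × Bool) : NC a a := by
  rintro ⟨-, h⟩; exact (Bool.not_ne_self a.2).symm h

lemma chain'_reduce (L : List (α × Bool)) : List.Chain' NC (reduce L) := by
  induction L with
  | nil => simp [List.Chain']
  | cons x L ih =>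
    rw [reduce.cons]
    rcases h : reduce L with - | ⟨hd, tl⟩
    · simp [List.Chain']
    · rw [h] at ih
      by_cases hc : x.1 = hd.1 ∧ x.2 = !hd.2
      · simpa [hc, List.Chain'] using ih.tail
      · simpa [hc, List.Chain'] using (List.isChain_cons_cons.2 ⟨hc, ih⟩)

lemma reduce_eq_self_of_chain' {L : List (α × Bool)} (h : List.Chain' NC L) :
    reduce L = L := by
  induction L with
  | nil => rfl
  | cons x L ih =>
    have ht : reduce L = L := ih h.tail
    rw [reduce.cons, ht]
    cases L with
    | nil => rfl
    | cons hd tl =>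
      have : NC x hd := (List.isChain_cons_cons.1 h).1
      simp only [NC] at this
      simp [this]

lemma invRev_cons (a : α × Bool) (l : List (α × Bool)) :
    invRev (a :: l) = invRev l ++ [(a.1, !a.2)] := by
  simp [invRev]

/-- cyclic decomposition of a reduced word -/
lemma cyclic_struct : ∀ (n : ℕ) (w : List (α × Bool)), w.length ≤ n →
    List.Chain' NC w → w ≠ [] →
    ∃ z c : List (α × Bool), w = z ++ c ++ invRev z ∧ c ≠ [] ∧
      (∀ x ∈ c.getLast?, ∀ y ∈ c.head?, NC x y) := by
  intro n
  induction n with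
  | zero => intro w hw _ hne; cases w <;> simp_all
  | succ n ih =>
    intro w hw hch hne
    rcases w with - | ⟨a, t⟩
    · exact absurd rfl hne
    rcases List.eq_nil_or_concat t with rfl | ⟨t', b, ht⟩
    · refine ⟨[], [a], by simp [invRev], by simp, ?_⟩
      simp only [List.getLast?_singleton, List.head?_cons, Option.mem_def,
        Option.some.injEq]
      rintro x rfl y rfl; exact nc_self a
    simp only [List.concat_eq_append] at ht
    subst ht
    by_cases hcan : b.1 = a.1 ∧ b.2 = !a.2
    · -- cancelling ends
      have hb : b = (a.1, !a.2) := Prod.ext hcan.1 hcan.2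
      have ht' : t' ≠ [] := by
        rintro rfl
        have : NC a b := (List.isChain_cons_cons.1 hch).1
        exact this ⟨hcan.1.symm, by rw [hcan.2]; simp⟩
      have hcht' : List.Chain' NC t' := by
        have h1 : List.Chain' NC (t' ++ [b]) := hch.tail
        exact (List.isChain_append.1 h1).1
      have hlen : t'.length ≤ n := by
        simp only [List.length_cons, List.length_append, List.length_singleton] at hw
        omega
      obtain ⟨z, c, hzc, hcne, hjunc⟩ := ih t' hlen hcht' ht'
      refine ⟨a :: z, c, ?_, hcne, hjunc⟩
      rw [invRev_cons, ← hb, hzc]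
      simp
    · -- already cyclically reduced
      refine ⟨[], a :: t' ++ [b], by simp [invRev], by simp, ?_⟩
      intro x hx y hy
      rw [show a :: t' ++ [b] = (a :: t') ++ [b] by simp, List.getLast?_concat] at hx
      simp only [List.cons_append, List.head?_cons, Option.mem_def,
        Option.some.injEq] at hx hy
      subst hx; subst hy
      exact hcan

end UFPAux

namespace UFPAux
open FreeGroup List

variable {α : Type*} [DecidableEq α]

lemma head?_flatten_replicate {c : List (α × Bool)} (hc : c ≠ []) (r : ℕ) (hr : 1 ≤ r) :
    (List.flatten (List.replicate r c)).head? = c.head? := by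
  cases r with
  | zero => omega
  | succ n =>
    rw [List.replicate_succ, List.flatten_cons]
    exact List.head?_append_of_ne_nil _ hc

lemma flatten_replicate_ne_nil {c : List (α × Bool)} (hc : c ≠ []) {r : ℕ} (hr : 1 ≤ r) :
    List.flatten (List.replicate r c) ≠ [] := by
  intro h
  have := head?_flatten_replicate hc r hr
  rw [h] at this
  cases c with
  | nil => exact hc rfl
  | cons a l => simp at this

lemma getLast?_flatten_replicate {c : List (α × Bool)} (hc : c ≠ []) (r : ℕ) (hr : 1 ≤ r) :
    (List.flatten (List.replicate r c)).getLast? = c.getLast? := by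
  induction r with
  | zero => omega
  | succ n ih =>
    rw [List.replicate_succ, List.flatten_cons]
    rcases Nat.eq_or_lt_of_le hr with h | h
    · have : n = 0 := by omega
      subst this; simp
    · have hn : 1 ≤ n := by omega
      rw [List.getLast?_append_of_ne_nil _ (flatten_replicate_ne_nil hc hn)]
      exact ih hn

lemma chain'_flatten_replicate {c : List (α × Bool)} (hc : c ≠ [])
    (hch : List.Chain' NC c)
    (hj : ∀ x ∈ c.getLast?, ∀ y ∈ c.head?, NC x y) (r : ℕ) :
    List.Chain' NC (List.flatten (List.replicate r c)) := by
  induction r with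
  | zero => simp [List.Chain']
  | succ n ih =>
    rw [List.replicate_succ, List.flatten_cons]
    refine List.isChain_append.2 ⟨hch, ih, ?_⟩
    intro x hx y hy
    rcases Nat.eq_zero_or_pos n with rfl | hn
    · simp at hy
    · rw [head?_flatten_replicate hc n hn] at hy
      exact hj x hx y hy

/-- KEY LEMMA: growth of norm under powers. -/
lemma norm_pow_ge {x : FreeGroup α} (hx : x ≠ 1) {r : ℕ} (hr : 1 ≤ r) :
    FreeGroup.norm x + r ≤ FreeGroup.norm (x ^ r) + 1 := by
  classical
  set w := x.toWord with hwdef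
  have hchw : List.Chain' NC w := by
    have := chain'_reduce (α := α) w
    rwa [reduce_toWord] at this
  have hwne : w ≠ [] := fun h => hx (toWord_eq_nil_iff.1 h)
  obtain ⟨z, c, hw, hcne, hj⟩ := cyclic_struct w.length w le_rfl hchw hwne
  -- chains and junctions from w
  have hsplit := List.isChain_append.1 (by rw [List.append_assoc] at hw; rw [← hw]; exact hchw)
  have hchz : List.Chain' NC z := hsplit.1
  have hsplit2 := List.isChain_append.1 hsplit.2.1
  have hchc : List.Chain' NC c := hsplit2.1
  have hchiz : List.Chain' NC (invRev z) := hsplit2.2.1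
  have hjz : ∀ x' ∈ z.getLast?, ∀ y ∈ (c ++ invRev z).head?, NC x' y := hsplit.2.2
  have hjc : ∀ x' ∈ c.getLast?, ∀ y ∈ (invRev z).head?, NC x' y := hsplit2.2.2
  -- the word for x^r
  set f := List.flatten (List.replicate r c) with hfdef
  have hfne : f ≠ [] := flatten_replicate_ne_nil hcne hr
  have hfh : f.head? = c.head? := head?_flatten_replicate hcne r hr
  have hfl : f.getLast? = c.getLast? := getLast?_flatten_replicate hcne r hr
  have hchW : List.Chain' NC (z ++ (f ++ invRev z)) := by
    refine List.isChain_append.2 ⟨hchz, ?_, ?_⟩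
    · refine List.isChain_append.2 ⟨chain'_flatten_replicate hcne hchc hj r, hchiz, ?_⟩
      intro a ha b hb
      rw [hfl] at ha
      exact hjc a ha b hb
    · intro a ha b hb
      rw [List.head?_append_of_ne_nil _ hfne, hfh] at hb
      refine hjz a ha b ?_
      rw [List.head?_append_of_ne_nil _ hcne]
      exact hb
  -- x^r = mk (z ++ f ++ invRev z)
  have hxeq : x = FreeGroup.mk z * FreeGroup.mk c * (FreeGroup.mk z)⁻¹ := by
    rw [inv_mk, mul_mk, mul_mk, ← hw, hwdef, mk_toWord]
  have hpow : x ^ r = FreeGroup.mk (z ++ (f ++ invRev z)) := by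
    rw [hxeq, conj_pow, pow_mk, ← hfdef, inv_mk, mul_mk, mul_mk, List.append_assoc]
  have htw : (x ^ r).toWord = z ++ (f ++ invRev z) := by
    rw [hpow, toWord_mk, reduce_eq_self_of_chain' hchW]
  -- lengths
  have hflen : f.length = r * c.length := by
    simp [hfdef]
  have h1 : FreeGroup.norm (x ^ r) = z.length + (r * c.length + z.length) := by
    rw [FreeGroup.norm, htw]
    simp [hflen, invRev_length]
  have h2 : FreeGroup.norm x = z.length + (c.length + z.length) := by
    rw [FreeGroup.norm, ← hwdef, hw]
    simp [invRev_length]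
  have hc1 : 1 ≤ c.length := by
    cases c with
    | nil => exact absurd rfl hcne
    | cons a l => simp
  rw [h1, h2]
  nlinarith [hc1, hr]

end UFPAux
namespace UFPProof

open Monoid

section Proj

variable {I : Type*} {G : I → Type*} [∀ i, Group (G i)]

lemma incl_refl_apply {X : Finset I} (h : X ⊆ X) (z : CoprodI fun i : X => G i) :
    incl (G := G) h z = z := by
  have : incl (G := G) h = MonoidHom.id _ := by
    apply CoprodI.ext_hom
    intro i
    ext g
    simp [incl, CoprodI.lift_of]
  rw [this]; rfl

lemma incl_cast {X A B : Finset I} (e : A = B) (hA : A ⊆ X) (hB : B ⊆ X)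
    (g : Π Z : Finset I, CoprodI fun i : Z => G i) :
    incl (G := G) hA (g A) = incl hB (g B) := by subst e; rfl

lemma UFP_coord_mul (x y : UFP I G) (X : Finset I) :
    (((x * y : UFP I G) : Π Z : Finset I, CoprodI fun i : Z => G i)) X
      = (x : Π Z : Finset I, CoprodI fun i : Z => G i) X
        * (y : Π Z : Finset I, CoprodI fun i : Z => G i) X := rfl

lemma UFP_one_coord (X : Finset I) :
    (((1 : UFP I G) : Π Z : Finset I, CoprodI fun i : Z => G i)) X = 1 := rfl

lemma UFP_ext {x y : UFP I G}
    (hxy : ∀ X : Finset I, (x : Π Z : Finset I, CoprodI fun i : Z => G i) X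
      = (y : Π Z : Finset I, CoprodI fun i : Z => G i) X) : x = y := by
  apply Subtype.ext; funext X; exact hxy X

lemma pProj_coord (S : Set I) (g : UFP I G) (X : Finset I) :
    ((pProj I G S g : UFP I G) : Π Z : Finset I, CoprodI fun i : Z => G i) X
      = incl (Finset.filter_subset (· ∈ S) X)
          ((g : Π Z : Finset I, CoprodI fun i : Z => G i) (X.filter (· ∈ S))) := rfl

/-- `p_S(g) = 1` iff all coordinates of `g` at finite subsets of `S` are trivial. -/
lemma pProj_eq_one_iff {S : Set I} {g : UFP I G} :
    pProj I G S g = 1 ↔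
      ∀ X : Finset I, (↑X : Set I) ⊆ S →
        (g : Π Z : Finset I, CoprodI fun i : Z => G i) X = 1 := by
  constructor
  · intro h X hX
    have hfil : X.filter (· ∈ S) = X :=
      Finset.filter_true_of_mem (fun i hi => hX hi)
    have h1 : ((pProj I G S g : UFP I G) : Π Z : Finset I, CoprodI fun i : Z => G i) X = 1 := by
      rw [h]; rfl
    rw [pProj_coord, incl_cast hfil _ (Finset.Subset.refl X), incl_refl_apply] at h1
    exact h1
  · intro hg
    apply UFP_ext
    intro X
    rw [pProj_coord, UFP_one_coord]
    have : (g : Π Z : Finset I, CoprodI fun i : Z => G i) (X.filter (· ∈ S)) = 1 := by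
      apply hg
      intro i hi
      simp only [Finset.coe_filter, Set.mem_setOf_eq] at hi
      exact hi.2
    rw [this, map_one]

end Proj

section Supp

variable {I : Type*} {G : I → Type*} [∀ i, Group (G i)]
variable {F : Type*} [Group F] (h : UFP I G →* F)

lemma univ_mem_supp : Set.univ ∈ supp I G h := by
  intro g hg
  have : g = 1 := by
    apply UFP_ext
    intro X
    rw [UFP_one_coord]
    exact pProj_eq_one_iff.1 hg X (by intro i _; trivial)
  rw [this, map_one]

lemma supp_superset {X Y : Set I} (hXY : X ⊆ Y) (hX : X ∈ supp I G h) : Y ∈ supp I G h := by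
  intro g hg
  apply hX g
  rw [pProj_eq_one_iff]
  intro Z hZ
  exact pProj_eq_one_iff.1 hg Z (fun i hi => hXY (hZ hi))

/-- for `X ∈ supp h`, `h` factors through `p_X`. -/
lemma supp_factor {X : Set I} (hX : X ∈ supp I G h) (g : UFP I G) :
    h g = h (pProj I G X g) := by
  have hker : pProj I G X (g * (pProj I G X g)⁻¹) = 1 := by
    rw [pProj_eq_one_iff]
    intro Z hZ
    have hfil : Z.filter (· ∈ X) = Z := Finset.filter_true_of_mem (fun i hi => hZ hi)
    have hco : ((pProj I G X g : UFP I G) : Π W : Finset I, CoprodI fun i : W => G i) Z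
        = (g : Π W : Finset I, CoprodI fun i : W => G i) Z := by
      rw [pProj_coord, incl_cast hfil _ (Finset.Subset.refl Z), incl_refl_apply]
    calc ((g * (pProj I G X g)⁻¹ : UFP I G) : Π W : Finset I, CoprodI fun i : W => G i) Z
        = (g : Π W : Finset I, CoprodI fun i : W => G i) Z *
          (((pProj I G X g : UFP I G) : Π W : Finset I, CoprodI fun i : W => G i) Z)⁻¹ := rfl
      _ = 1 := by rw [hco, mul_inv_cancel]
  have := hX _ hker
  rw [map_mul, map_inv] at this
  rwa [← mul_inv_eq_one]

lemma supp_inter {X Y : Set I} (hX : X ∈ supp I G h) (hY : Y ∈ supp I G h) :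
    X ∩ Y ∈ supp I G h := by
  intro g hg
  rw [supp_factor h hX g]
  apply hY
  rw [pProj_eq_one_iff]
  intro Z hZ
  rw [pProj_coord]
  have : (g : Π W : Finset I, CoprodI fun i : W => G i) (Z.filter (· ∈ X)) = 1 := by
    apply pProj_eq_one_iff.1 hg
    intro i hi
    simp only [Finset.coe_filter, Set.mem_setOf_eq] at hi
    exact ⟨hi.2, hZ hi.1⟩
  rw [this, map_one]

lemma UFP_coord_empty (g : UFP I G) :
    (g : Π Z : Finset I, CoprodI fun i : Z => G i) (∅ : Finset I) = 1 := by
  have hid : (MonoidHom.id (CoprodI fun i : (∅ : Finset I) => G i)) = 1 := by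
    apply CoprodI.ext_hom
    intro i
    exact absurd i.2 (Finset.notMem_empty i.1)
  calc (g : Π Z : Finset I, CoprodI fun i : Z => G i) ∅
      = (MonoidHom.id _) ((g : Π Z : Finset I, CoprodI fun i : Z => G i) ∅) := rfl
    _ = 1 := by rw [hid]; rfl

lemma empty_not_mem_supp (hnt : h ≠ 1) : (∅ : Set I) ∉ supp I G h := by
  intro hmem
  apply hnt
  ext g
  have : pProj I G (∅ : Set I) g = 1 := by
    rw [pProj_eq_one_iff]
    intro X hX
    have : X = (∅ : Finset I) := by
      ext i
      simp only [Finset.notMem_empty, iff_false]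
      intro hi
      exact (hX hi : i ∈ (∅ : Set I))
    rw [this]
    exact UFP_coord_empty g
  rw [hmem g this]
  rfl

end Supp

end UFPProof
namespace UFPProof

section Nest

variable {M : Type*} [Monoid M]

/-- inside-out nested powers: `nest c r m n` is the `n`-stage truncation of
`(c m · (c (m+1) · (⋯))^(r (m+1)))^(r m)`. -/
def nest (c : ℕ → M) (r : ℕ → ℕ) : ℕ → ℕ → M
  | _, 0 => 1
  | m, (n+1) => (c m * nest c r (m+1) n) ^ (r m)

lemma hom_nest {N : Type*} [Monoid N] (φ : M →* N) (c : ℕ → M) (r : ℕ → ℕ) :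
    ∀ n m, φ (nest c r m n) = nest (fun k => φ (c k)) r m n := by
  intro n
  induction n with
  | zero => intro m; simp [nest]
  | succ n ih => intro m; simp [nest, map_pow, map_mul, ih]

lemma nest_eq_one {c : ℕ → M} {r : ℕ → ℕ} {K : ℕ} (hc : ∀ k, K ≤ k → c k = 1) :
    ∀ n m, K ≤ m → nest c r m n = 1 := by
  intro n
  induction n with
  | zero => intro m _; rfl
  | succ n ih =>
    intro m hm
    rw [nest, hc m hm, ih (m + 1) (le_trans hm (Nat.le_succ m)), mul_one, one_pow]

lemma nest_succ_eq {c : ℕ → M} {r : ℕ → ℕ} {K : ℕ} (hc : ∀ k, K ≤ k → c k = 1) :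
    ∀ n m, K ≤ m + n → nest c r m (n + 1) = nest c r m n := by
  intro n
  induction n with
  | zero =>
    intro m hm
    rw [nest, nest, hc m (by omega), one_mul]
    show (nest c r (m+1) 0) ^ (r m) = 1
    rw [nest_eq_one hc 0 (m+1) (by omega), one_pow]
  | succ n ih =>
    intro m hm
    show (c m * nest c r (m+1) (n+1)) ^ (r m) = (c m * nest c r (m+1) n) ^ (r m)
    rw [ih (m + 1) (by omega)]

lemma nest_add_eq {c : ℕ → M} {r : ℕ → ℕ} {K : ℕ} (hc : ∀ k, K ≤ k → c k = 1) :
    ∀ (d n m : ℕ), K ≤ m + n → nest c r m (n + d) = nest c r m n := by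
  intro d
  induction d with
  | zero => intro n m _; rfl
  | succ d ih =>
    intro n m hm
    have : n + (d + 1) = (n + d) + 1 := by omega
    rw [this, nest_succ_eq hc (n + d) m (by omega), ih n m hm]

lemma nest_stable {c : ℕ → M} {r : ℕ → ℕ} {K₁ K₂ : ℕ}
    (h1 : ∀ k, K₁ ≤ k → c k = 1) (h2 : ∀ k, K₂ ≤ k → c k = 1)
    {m n₁ n₂ : ℕ} (ha : K₁ ≤ m + n₁) (hb : K₂ ≤ m + n₂) :
    nest c r m n₁ = nest c r m n₂ := by
  have e1 : nest c r m (n₁ + n₂) = nest c r m n₁ := nest_add_eq h1 n₂ n₁ m ha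
  have e2 : nest c r m (n₂ + n₁) = nest c r m n₂ := nest_add_eq h2 n₁ n₂ m hb
  rw [← e1, ← e2, Nat.add_comm]

end Nest

section NestUFP

variable {I : Type*} {G : I → Type*} [∀ i, Group (G i)]

/-- A "null" sequence in the unrestricted free product: at each coordinate only
finitely many terms are non-trivial. -/
def IsNull (v : ℕ → UFP I G) : Prop :=
  ∀ X : Finset I, {n | (v n : Π Z : Finset I, CoprodI fun i : Z => G i) X ≠ 1}.Finite

noncomputable def nullCut {v : ℕ → UFP I G} (hv : IsNull v) (X : Finset I) : ℕ :=
  ((hv X).toFinset.sup id) + 1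

lemma nullCut_spec {v : ℕ → UFP I G} (hv : IsNull v) (X : Finset I) :
    ∀ k, nullCut hv X ≤ k → (v k : Π Z : Finset I, CoprodI fun i : Z => G i) X = 1 := by
  intro k hk
  by_contra hne
  have : k ∈ (hv X).toFinset := (Set.Finite.mem_toFinset _).2 hne
  have := Finset.le_sup (f := id) this
  simp only [id] at this
  unfold nullCut at hk
  omega

/-- the nested element `(v m · (v (m+1) · ⋯)^(r (m+1)))^(r m)` of the unrestricted
free product, built coordinatewise. -/
noncomputable def nestUFP {v : ℕ → UFP I G} (hv : IsNull v) (r : ℕ → ℕ) (m : ℕ) :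
    UFP I G :=
  ⟨fun X => nest (fun k => (v k : Π Z : Finset I, CoprodI fun i : Z => G i) X) r m
      (nullCut hv X),
   by
    intro X Y hXY
    rw [hom_nest (bond hXY) _ r (nullCut hv Y) m]
    have hfun : (fun k => bond hXY ((v k : Π Z : Finset I, CoprodI fun i : Z => G i) Y))
        = fun k => (v k : Π Z : Finset I, CoprodI fun i : Z => G i) X := by
      funext k
      exact (v k).2 hXY
    rw [hfun]
    exact nest_stable
      (fun k hk => by rw [← (v k).2 hXY, nullCut_spec hv Y k hk, map_one])
      (nullCut_spec hv X)
      (by omega) (by omega)⟩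

lemma nestUFP_succ {v : ℕ → UFP I G} (hv : IsNull v) (r : ℕ → ℕ) (m : ℕ) :
    nestUFP hv r m = (v m * nestUFP hv r (m + 1)) ^ (r m) := by
  apply UFP_ext
  intro X
  have hco : ((((v m * nestUFP hv r (m + 1)) ^ (r m) : UFP I G)) :
      Π Z : Finset I, CoprodI fun i : Z => G i) X
      = ((v m : Π Z : Finset I, CoprodI fun i : Z => G i) X *
          (nestUFP hv r (m + 1) : Π Z : Finset I, CoprodI fun i : Z => G i) X) ^ (r m) := rfl
  rw [hco]
  show nest (fun k => (v k : Π Z : Finset I, CoprodI fun i : Z => G i) X) r m (nullCut hv X)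
      = ((v m : Π Z : Finset I, CoprodI fun i : Z => G i) X *
        nest (fun k => (v k : Π Z : Finset I, CoprodI fun i : Z => G i) X) r (m+1)
          (nullCut hv X)) ^ (r m)
  have : ((v m : Π Z : Finset I, CoprodI fun i : Z => G i) X *
        nest (fun k => (v k : Π Z : Finset I, CoprodI fun i : Z => G i) X) r (m+1)
          (nullCut hv X)) ^ (r m)
      = nest (fun k => (v k : Π Z : Finset I, CoprodI fun i : Z => G i) X) r m
          (nullCut hv X + 1) := rfl
  rw [this]
  exact nest_stable (nullCut_spec hv X) (nullCut_spec hv X) (by omega) (by omega)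

end NestUFP

section Core

variable {I : Type*} {G : I → Type*} [∀ i, Group (G i)]

/-- The core non-commutative Specker/Higman lemma: a homomorphism to a free group
kills all but finitely many terms of a null sequence; here in the form: it cannot be
non-trivial on every term. -/
theorem core_lemma {α : Type*} (h : UFP I G →* FreeGroup α) (v : ℕ → UFP I G)
    (hv : IsNull v) (ha : ∀ n, h (v n) ≠ 1) : False := by
  classical
  set a : ℕ → FreeGroup α := fun n => h (v n) with hadef
  set nrm : ℕ → ℕ := fun n => FreeGroup.norm (a n) with hnrmdef
  set r : ℕ → ℕ := fun m => ((Finset.range (m + 1)).sup nrm) + 2 with hrdef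
  have hra : ∀ m, nrm m + 2 ≤ r m := by
    intro m
    have : nrm m ≤ (Finset.range (m + 1)).sup nrm :=
      Finset.le_sup (Finset.self_mem_range_succ m)
    simp only [hrdef]
    omega
  have hrb : ∀ m, nrm m + 2 ≤ r (m + 1) := by
    intro m
    have : nrm m ≤ (Finset.range (m + 1 + 1)).sup nrm :=
      Finset.le_sup (Finset.mem_range.2 (by omega))
    simp only [hrdef]
    omega
  set V : ℕ → FreeGroup α := fun m => h (nestUFP hv r m) with hVdef
  have hrel : ∀ m, V m = (a m * V (m + 1)) ^ (r m) := by
    intro m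
    show h (nestUFP hv r m) = (h (v m) * h (nestUFP hv r (m + 1))) ^ (r m)
    rw [← map_mul, ← map_pow, ← nestUFP_succ hv r m]
  have hstep : ∀ m, a m * V (m + 1) ≠ 1 →
      FreeGroup.norm (V (m + 1)) + 1 ≤ FreeGroup.norm (V m) := by
    intro m hx
    have hA : FreeGroup.norm (a m * V (m + 1)) + r m ≤ FreeGroup.norm (V m) + 1 := by
      rw [hrel m]
      exact UFPAux.norm_pow_ge hx ((by omega : (1:ℕ) ≤ nrm m + 2).trans (hra m))
    have hB : FreeGroup.norm (V (m + 1)) ≤ nrm m + FreeGroup.norm (a m * V (m + 1)) := by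
      have : V (m + 1) = (a m)⁻¹ * (a m * V (m + 1)) := by group
      calc FreeGroup.norm (V (m + 1))
          = FreeGroup.norm ((a m)⁻¹ * (a m * V (m + 1))) := by rw [← this]
        _ ≤ FreeGroup.norm (a m)⁻¹ + FreeGroup.norm (a m * V (m + 1)) :=
            FreeGroup.norm_mul_le _ _
        _ = nrm m + FreeGroup.norm (a m * V (m + 1)) := by rw [FreeGroup.norm_inv_eq]
    have := hra m
    omega
  have hexists : ¬ (∀ m, a m * V (m + 1) ≠ 1) := by
    intro hall
    have hdesc : ∀ m, FreeGroup.norm (V m) + m ≤ FreeGroup.norm (V 0) := by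
      intro m
      induction m with
      | zero => omega
      | succ m ih =>
        have := hstep m (hall m)
        omega
    have := hdesc (FreeGroup.norm (V 0) + 1)
    omega
  push_neg at hexists
  obtain ⟨m, hm⟩ := hexists
  have hVm1 : V (m + 1) = (a m)⁻¹ := eq_inv_of_mul_eq_one_right hm
  by_cases hx2 : a (m + 1) * V (m + 2) = 1
  · have hone : V (m + 1) = 1 := by rw [hrel (m + 1), hx2, one_pow]
    rw [hVm1, inv_eq_one] at hone
    exact ha m hone
  · have h1 : FreeGroup.norm (a (m + 1) * V (m + 2)) + r (m + 1)
        ≤ FreeGroup.norm (V (m + 1)) + 1 := by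
      rw [hrel (m + 1)]
      exact UFPAux.norm_pow_ge hx2 ((by omega : (1:ℕ) ≤ nrm m + 2).trans (hrb m))
    have h2 : 1 ≤ FreeGroup.norm (a (m + 1) * V (m + 2)) := by
      rcases Nat.eq_zero_or_pos (FreeGroup.norm (a (m + 1) * V (m + 2))) with h0 | h0
      · exact absurd (FreeGroup.norm_eq_zero.1 h0) hx2
      · exact h0
    have h3 := hrb m
    have h4 : FreeGroup.norm (V (m + 1)) = nrm m := by
      rw [hVm1, FreeGroup.norm_inv_eq]
    omega

end Core

end UFPProof
namespace UFPProof

section Sigma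

variable {I : Type*} {G : I → Type*} [∀ i, Group (G i)]
variable {α : Type*}

/-- running intersections of a sequence of sets -/
def seqInter (s : ℕ → Set I) : ℕ → Set I :=
  fun n => Nat.rec (s 0) (fun k acc => acc ∩ s (k + 1)) n

lemma seqInter_succ (s : ℕ → Set I) (n : ℕ) :
    seqInter s (n + 1) = seqInter s n ∩ s (n + 1) := rfl

lemma seqInter_antitone (s : ℕ → Set I) : Antitone (seqInter s) := by
  apply antitone_nat_of_succ_le
  intro n
  rw [seqInter_succ]
  exact Set.inter_subset_left

lemma seqInter_subset (s : ℕ → Set I) (n : ℕ) : seqInter s n ⊆ s n := by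
  cases n with
  | zero => exact Set.Subset.refl _
  | succ n => rw [seqInter_succ]; exact Set.inter_subset_right

lemma iInter_seqInter (s : ℕ → Set I) : (⋂ n, seqInter s n) = ⋂ n, s n := by
  apply Set.Subset.antisymm
  · exact Set.iInter_mono (seqInter_subset s)
  · intro x hx
    rw [Set.mem_iInter] at hx ⊢
    intro n
    induction n with
    | zero => exact hx 0
    | succ n ih => exact ⟨ih, hx (n + 1)⟩

/-- σ-completeness of the support of a homomorphism to a free group. -/
lemma supp_ciInter (h : UFP I G →* FreeGroup α) (s : ℕ → Set I)
    (hs : ∀ n, s n ∈ supp I G h) : (⋂ n, s n) ∈ supp I G h := by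
  intro g hg
  set Y := seqInter s with hYdef
  have hY : ∀ n, Y n ∈ supp I G h := by
    intro n
    induction n with
    | zero => exact hs 0
    | succ n ih => exact supp_inter h ih (hs (n + 1))
  by_contra hne
  refine core_lemma h (fun n => pProj I G (Y n) g) ?_ ?_
  · -- nullness
    intro X
    have hbig : ∃ N, ∀ i ∈ X, i ∈ Y N → i ∈ ⋂ k, s k := by
      classical
      induction X using Finset.induction_on with
      | empty => exact ⟨0, by simp⟩
      | @insert a X' ha ih =>
        obtain ⟨N', hN'⟩ := ih
        by_cases hmem : a ∈ ⋂ k, s k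
        · refine ⟨N', ?_⟩
          intro i hi
          rcases Finset.mem_insert.1 hi with rfl | hi'
          · exact fun _ => hmem
          · exact hN' i hi'
        · have hna : ∃ na, a ∉ Y na := by
            by_contra hall
            push_neg at hall
            apply hmem
            rw [← iInter_seqInter s]
            exact Set.mem_iInter.2 hall
          obtain ⟨na, hna⟩ := hna
          refine ⟨max N' na, ?_⟩
          intro i hi hiY
          rcases Finset.mem_insert.1 hi with rfl | hi'
          · exact absurd (seqInter_antitone s (le_max_right N' na) hiY) hna
          · exact hN' i hi' (seqInter_antitone s (le_max_left N' na) hiY)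
    obtain ⟨N, hN⟩ := hbig
    apply Set.Finite.subset (Set.finite_Iio N)
    intro n hn
    rw [Set.mem_setOf_eq] at hn
    by_contra hnN
    apply hn
    have hnN' : N ≤ n := by
      rw [Set.mem_Iio] at hnN; omega
    rw [pProj_coord]
    have : (g : Π Z : Finset I, CoprodI fun i : Z => G i) (X.filter (· ∈ Y n)) = 1 := by
      apply pProj_eq_one_iff.1 hg
      intro i hi
      simp only [Finset.coe_filter, Set.mem_setOf_eq] at hi
      exact hN i hi.1 (seqInter_antitone s hnN' hi.2)
    rw [this, map_one]
  · -- all values nontrivial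
    intro n
    rw [← supp_factor h (hY n) g]
    exact hne

/-- all but finitely many members of a disjoint family have their complement
in the support. -/
lemma disjoint_compl_supp_finite (h : UFP I G →* FreeGroup α) (A : ℕ → Set I)
    (hdisj : Pairwise (Function.onFun Disjoint A)) :
    {n | (A n)ᶜ ∉ supp I G h}.Finite := by
  classical
  by_contra hinf
  rw [← Set.not_infinite, not_not] at hinf
  set e := hinf.natEmbedding with hedef
  have hwit : ∀ k : ℕ, ∃ g : UFP I G, pProj I G ((A ((e k).1))ᶜ) g = 1 ∧ h g ≠ 1 := by
    intro k
    have hk := (e k).2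
    rw [Set.mem_setOf_eq] at hk
    by_contra hno
    push_neg at hno
    exact hk (fun g hg => hno g hg)
  choose w hw1 hw2 using hwit
  refine core_lemma h w ?_ hw2
  intro X
  have hxi : ∀ k, (w k : Π Z : Finset I, CoprodI fun i : Z => G i) X ≠ 1 →
      ∃ i, i ∈ X ∧ i ∈ A ((e k).1) := by
    intro k hk
    by_contra hno
    push_neg at hno
    apply hk
    apply pProj_eq_one_iff.1 (hw1 k) X
    intro i hi
    exact fun hiA => hno i hi hiA
  have hsub : {k | (w k : Π Z : Finset I, CoprodI fun i : Z => G i) X ≠ 1}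
      ⊆ ⋃ i ∈ (X : Finset I), {k | i ∈ A ((e k).1)} := by
    intro k hk
    obtain ⟨i, hiX, hiA⟩ := hxi k hk
    exact Set.mem_biUnion hiX hiA
  refine Set.Finite.subset ?_ hsub
  refine Set.Finite.biUnion (X.finite_toSet) ?_
  intro i _
  apply Set.Subsingleton.finite
  intro k hk k' hk'
  rw [Set.mem_setOf_eq] at hk hk'
  by_contra hkk
  have hne : (e k).1 ≠ (e k').1 := by
    intro hc
    exact hkk (e.injective (Subtype.ext hc))
  exact Set.disjoint_left.1 (hdisj hne) hk hk'

end Sigma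

end UFPProof
namespace UFPProof

section Ultra

variable {I : Type*} {G : I → Type*} [∀ i, Group (G i)] {α : Type*}

/-- the support of a homomorphism, as a filter -/
def suppFilter (h : UFP I G →* FreeGroup α) : Filter I where
  sets := supp I G h
  univ_sets := univ_mem_supp h
  sets_of_superset := fun hX hXY => supp_superset h hXY hX
  inter_sets := fun hX hY => supp_inter h hX hY

lemma mem_suppFilter (h : UFP I G →* FreeGroup α) {X : Set I} :
    X ∈ suppFilter h ↔ X ∈ supp I G h := Iff.rfl

lemma suppFilter_neBot (h : UFP I G →* FreeGroup α) (hnt : h ≠ 1) :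
    (suppFilter h).NeBot := by
  rw [Filter.neBot_iff]
  intro hbot
  have : (∅ : Set I) ∈ suppFilter h := by rw [hbot]; trivial
  exact empty_not_mem_supp h hnt this

/-- every ultrafilter over the support filter is countably complete. -/
lemma cc_of_le_suppFilter (h : UFP I G →* FreeGroup α) {u : Ultrafilter I}
    (hu : (u : Filter I) ≤ suppFilter h) : CountablyComplete u := by
  classical
  intro s hs
  set Y := seqInter s with hYdef
  have hYu : ∀ n, Y n ∈ u := by
    intro n
    induction n with
    | zero => exact hs 0
    | succ k ih => exact Filter.inter_mem ih (hs (k + 1))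
  set A : ℕ → Set I := fun n => Nat.rec ((Y 0)ᶜ) (fun k _ => Y k \ Y (k + 1)) n with hAdef
  have hA0 : A 0 = (Y 0)ᶜ := rfl
  have hAs : ∀ n, A (n + 1) = Y n \ Y (n + 1) := fun n => rfl
  have hdisj : Pairwise (Function.onFun Disjoint A) := by
    have key : ∀ m n, m < n → Disjoint (A m) (A n) := by
      intro m n hmn
      rw [Set.disjoint_left]
      intro x hxm hxn
      obtain ⟨k, rfl⟩ : ∃ k, n = k + 1 := ⟨n - 1, by omega⟩
      have hxYk : x ∈ Y k := (hAs k ▸ hxn).1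
      cases m with
      | zero => exact (hA0 ▸ hxm) (seqInter_antitone s (Nat.zero_le k) hxYk)
      | succ j =>
        have hxm' := hAs j ▸ hxm
        exact hxm'.2 (seqInter_antitone s (by omega : j + 1 ≤ k) hxYk)
    intro m n hmn
    rcases lt_or_gt_of_ne hmn with hlt | hgt
    · exact key m n hlt
    · exact (key n m hgt).symm
  have hbad := disjoint_compl_supp_finite h A hdisj
  set T : ℕ → Set I := fun n => if (A n)ᶜ ∈ supp I G h then (A n)ᶜ else Set.univ with hTdef
  have hT : ∀ n, T n ∈ supp I G h := by
    intro n
    by_cases hsplit : (A n)ᶜ ∈ supp I G h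
    · simp only [hTdef, if_pos hsplit]; exact hsplit
    · simp only [hTdef, if_neg hsplit]; exact univ_mem_supp h
  have hTin : (⋂ n, T n) ∈ u := Filter.le_def.1 hu _ (supp_ciInter h T hT)
  have hAcu : ∀ n, (A n)ᶜ ∈ u := by
    intro n
    cases n with
    | zero => rw [hA0, compl_compl]; exact hYu 0
    | succ k =>
      apply Filter.mem_of_superset (hYu (k + 1))
      rw [hAs]
      intro x hx hmem
      exact hmem.2 hx
  have hbadInter : (⋂ n ∈ hbad.toFinset, (A n)ᶜ) ∈ u :=
    (Filter.biInter_finset_mem _).2 (fun n _ => hAcu n)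
  have hfinal : (⋂ n, T n) ∩ (⋂ n ∈ hbad.toFinset, (A n)ᶜ) ⊆ ⋂ n, s n := by
    intro x hx
    have hxA : ∀ n, x ∉ A n := by
      intro n
      by_cases hgood : (A n)ᶜ ∈ supp I G h
      · have hxT : x ∈ T n := Set.mem_iInter.1 hx.1 n
        simp only [hTdef, if_pos hgood] at hxT
        exact hxT
      · have hn : n ∈ hbad.toFinset := (Set.Finite.mem_toFinset _).2 hgood
        exact Set.mem_iInter₂.1 hx.2 n hn
    have hxY : ∀ n, x ∈ Y n := by
      intro n
      induction n with
      | zero =>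
        by_contra hc
        exact hxA 0 (by rw [hA0]; exact hc)
      | succ k ih =>
        by_contra hc
        exact hxA (k + 1) (by rw [hAs]; exact ⟨ih, hc⟩)
    rw [← iInter_seqInter s]
    exact Set.mem_iInter.2 hxY
  exact Filter.mem_of_superset (Filter.inter_mem hTin hbadInter) hfinal

lemma ultra_sep {J : Type*} {u v : Ultrafilter J} (huv : u ≠ v) :
    ∃ B : Set J, B ∈ u ∧ Bᶜ ∈ v := by
  have hne : ¬ ∀ s : Set J, s ∈ u ↔ s ∈ v := by
    intro hc
    exact huv (Ultrafilter.coe_injective (Filter.ext fun s => hc s))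
  obtain ⟨s, hs⟩ := not_forall.1 hne
  by_cases h1 : s ∈ u
  · refine ⟨s, h1, Ultrafilter.compl_mem_iff_notMem.2 fun h2 => hs ⟨fun _ => h2, fun _ => h1⟩⟩
  · by_cases h2 : s ∈ v
    · exact ⟨sᶜ, Ultrafilter.compl_mem_iff_notMem.2 h1, by rwa [compl_compl]⟩
    · exact absurd ⟨fun hh => absurd hh h1, fun hh => absurd hh h2⟩ hs

/-- there are only finitely many ultrafilters over the support filter. -/
lemma ultra_le_finite (h : UFP I G →* FreeGroup α) :
    {u : Ultrafilter I | (u : Filter I) ≤ suppFilter h}.Finite := by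
  classical
  by_contra hinf
  rw [← Set.not_infinite, not_not] at hinf
  set e := hinf.natEmbedding with hedef
  set u : ℕ → Ultrafilter I := fun n => (e n).1 with hudef
  have hu : ∀ n, ((u n : Ultrafilter I) : Filter I) ≤ suppFilter h := fun n => (e n).2
  have huinj : Function.Injective u := fun a b hab => e.injective (Subtype.ext hab)
  have hBex : ∀ j k : ℕ, ∃ B : Set I, j ≠ k → (B ∈ u j ∧ Bᶜ ∈ u k) := by
    intro j k
    by_cases hjk : j = k
    · exact ⟨Set.univ, fun hc => absurd hjk hc⟩
    · obtain ⟨B, hB1, hB2⟩ := ultra_sep (fun hc => hjk (huinj hc) : u j ≠ u k)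
      exact ⟨B, fun _ => ⟨hB1, hB2⟩⟩
  choose Bs hBs using hBex
  set D : ℕ → ℕ → Set I := fun n m =>
    if n = m then Set.univ else (Bs n m ∩ (Bs m n)ᶜ) with hDdef
  have hD : ∀ n m, D n m ∈ u n := by
    intro n m
    by_cases hnm : n = m
    · simp only [hDdef, if_pos hnm]; exact Filter.univ_mem
    · simp only [hDdef, if_neg hnm]
      exact Filter.inter_mem ((hBs n m hnm).1) ((hBs m n (Ne.symm hnm)).2)
  have hAcc : ∀ n, (⋂ m, D n m) ∈ u n := fun n =>
    cc_of_le_suppFilter h (hu n) (D n) (hD n)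
  have hdisj : Pairwise (Function.onFun Disjoint (fun n => ⋂ m, D n m)) := by
    intro n m hnm
    rw [Function.onFun, Set.disjoint_left]
    intro x hxn hxm
    have h1 : x ∈ D n m := Set.mem_iInter.1 hxn m
    have h2 : x ∈ D m n := Set.mem_iInter.1 hxm n
    simp only [hDdef, if_neg hnm, if_neg (Ne.symm hnm)] at h1 h2
    exact h2.2 h1.1
  have hbad := disjoint_compl_supp_finite h (fun n => ⋂ m, D n m) hdisj
  have hall : ∀ n : ℕ, ((⋂ m, D n m)ᶜ ∉ supp I G h) := by
    intro n hc
    have hcu : (⋂ m, D n m)ᶜ ∈ u n := Filter.le_def.1 (hu n) _ hc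
    exact (Ultrafilter.compl_notMem_iff.2 (hAcc n)) hcu
  have huniv : (Set.univ : Set ℕ).Finite := hbad.subset (fun n _ => hall n)
  exact Set.infinite_univ huniv

end Ultra

end UFPProof
/-- For a non-trivial homomorphism `h : lim← *_{i∈I} G_i → F` there is a finite partition
`I = I₀ ∪ ⋯ ∪ I_n` into pairwise disjoint sets and countably complete ultrafilters
`u₀, …, u_n` with `I_k ∈ u_k`, such that `U₀ ∪ ⋯ ∪ U_n ∈ supp(h)` whenever `U_k ∈ u_k`. -/
theorem supp_finite_partition {I : Type*} (G : I → Type*) [∀ i, Group (G i)]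
    {α : Type*} (h : UFP I G →* FreeGroup α) (hnt : h ≠ 1) :
    ∃ (n : ℕ) (Is : Fin (n + 1) → Set I) (u : Fin (n + 1) → Ultrafilter I),
      (⋃ k, Is k) = Set.univ ∧ Pairwise (Function.onFun Disjoint Is) ∧
      (∀ k, CountablyComplete (u k) ∧ Is k ∈ u k) ∧
      ∀ U : Fin (n + 1) → Set I, (∀ k, U k ∈ u k) → (⋃ k, U k) ∈ supp I G h := by
  classical
  haveI : (UFPProof.suppFilter h).NeBot := UFPProof.suppFilter_neBot h hnt
  obtain ⟨u0, hu0⟩ := Ultrafilter.exists_le (UFPProof.suppFilter h)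
  have hEfin : {u : Ultrafilter I | (u : Filter I) ≤ UFPProof.suppFilter h}.Finite :=
    UFPProof.ultra_le_finite h
  set Ef := hEfin.toFinset with hEfdef
  have hu0' : u0 ∈ Ef := (Set.Finite.mem_toFinset _).2 hu0
  set n := Ef.card - 1 with hndef
  have hcard : Ef.card = n + 1 := by
    have : 0 < Ef.card := Finset.card_pos.2 ⟨u0, hu0'⟩
    omega
  set eqv : {x // x ∈ Ef} ≃ Fin (n + 1) := Ef.equivFin.trans (finCongr hcard) with heqv
  set u : Fin (n + 1) → Ultrafilter I := fun k => ((eqv.symm k : {x // x ∈ Ef}) : Ultrafilter I)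
    with hudef
  have huE : ∀ k, ((u k : Ultrafilter I) : Filter I) ≤ UFPProof.suppFilter h := fun k =>
    (Set.Finite.mem_toFinset _).1 (eqv.symm k).2
  have husurj : ∀ v : Ultrafilter I, (v : Filter I) ≤ UFPProof.suppFilter h → ∃ k, u k = v := by
    intro v hv
    refine ⟨eqv ⟨v, (Set.Finite.mem_toFinset _).2 hv⟩, ?_⟩
    simp only [hudef, Equiv.symm_apply_apply]
  have huinj : Function.Injective u := by
    intro a b hab
    exact eqv.symm.injective (Subtype.ext hab)
  -- separating sets
  have hBex : ∀ j k : Fin (n + 1), ∃ B : Set I, j ≠ k → (B ∈ u j ∧ Bᶜ ∈ u k) := by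
    intro j k
    by_cases hjk : j = k
    · exact ⟨Set.univ, fun hc => absurd hjk hc⟩
    · obtain ⟨B, hB1, hB2⟩ := UFPProof.ultra_sep (fun hc => hjk (huinj hc) : u j ≠ u k)
      exact ⟨B, fun _ => ⟨hB1, hB2⟩⟩
  choose Bs hBs using hBex
  set T : Fin (n + 1) → Set I := fun k =>
    ⋂ j, (if j = k then Set.univ else (Bs k j ∩ (Bs j k)ᶜ)) with hTdef
  have hT : ∀ k, T k ∈ u k := by
    intro k
    have hTk : T k = ⋂ j, (if j = k then Set.univ else (Bs k j ∩ (Bs j k)ᶜ)) := rfl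
    rw [hTk]
    refine Filter.iInter_mem.2 (fun j => ?_)
    by_cases hjk : j = k
    · simp only [if_pos hjk]; exact Filter.univ_mem
    · simp only [if_neg hjk]
      exact Filter.inter_mem ((hBs k j (Ne.symm hjk)).1) ((hBs j k hjk).2)
  have hTdisj : ∀ j k : Fin (n + 1), j ≠ k → Disjoint (T j) (T k) := by
    intro j k hjk
    rw [Set.disjoint_left]
    intro x hxj hxk
    have h1 : x ∈ (if k = j then Set.univ else (Bs j k ∩ (Bs k j)ᶜ)) :=
      Set.mem_iInter.1 hxj k
    have h2 : x ∈ (if j = k then Set.univ else (Bs k j ∩ (Bs j k)ᶜ)) :=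
      Set.mem_iInter.1 hxk j
    rw [if_neg (Ne.symm hjk)] at h1
    rw [if_neg hjk] at h2
    exact h2.2 h1.1
  set Is : Fin (n + 1) → Set I := fun k =>
    if k = 0 then T 0 ∪ (⋃ j, T j)ᶜ else T k with hIsdef
  have hmemIs : ∀ (l : Fin (n + 1)) (x : I), x ∈ Is l → x ∈ T l ∨ (l = 0 ∧ ∀ m, x ∉ T m) := by
    intro l x hx
    by_cases hl : l = 0
    · rw [hIsdef] at hx
      simp only [if_pos hl] at hx
      rcases hx with hx | hx
      · left; rw [hl]; exact hx
      · right
        refine ⟨hl, fun m hm => ?_⟩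
        exact hx (Set.mem_iUnion.2 ⟨m, hm⟩)
    · left
      rw [hIsdef] at hx
      simpa only [if_neg hl] using hx
  refine ⟨n, Is, u, ?_, ?_, ?_, ?_⟩
  · -- covering
    apply Set.eq_univ_of_forall
    intro x
    rw [Set.mem_iUnion]
    by_cases hx : ∃ j, x ∈ T j
    · obtain ⟨j, hj⟩ := hx
      by_cases hj0 : j = 0
      · refine ⟨0, ?_⟩
        rw [hIsdef]
        simp only [if_pos rfl]
        exact Or.inl (hj0 ▸ hj)
      · refine ⟨j, ?_⟩
        rw [hIsdef]
        simpa only [if_neg hj0] using hj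
    · refine ⟨0, ?_⟩
      rw [hIsdef]
      simp only [if_pos rfl]
      right
      intro hc
      rw [Set.mem_iUnion] at hc
      exact hx hc
  · -- pairwise disjoint
    intro j k hjk
    rw [Function.onFun, Set.disjoint_left]
    intro x hxj hxk
    rcases hmemIs j x hxj with hj | ⟨hj0, hjall⟩
    · rcases hmemIs k x hxk with hk | ⟨hk0, hkall⟩
      · exact Set.disjoint_left.1 (hTdisj j k hjk) hj hk
      · exact hkall j hj
    · rcases hmemIs k x hxk with hk | ⟨hk0, hkall⟩
      · exact hjall k hk
      · exact hjk (hj0.trans hk0.symm)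
  · -- countably complete, Is k ∈ u k
    intro k
    refine ⟨UFPProof.cc_of_le_suppFilter h (huE k), ?_⟩
    apply Filter.mem_of_superset (hT k)
    intro x hx
    rw [hIsdef]
    by_cases hk : k = 0
    · simp only [if_pos hk]
      exact Or.inl (hk ▸ hx)
    · simpa only [if_neg hk] using hx
  · -- main property
    intro U hU
    by_contra hX
    have hne : ∀ Z ∈ UFPProof.suppFilter h, (Z ∩ (⋃ k, U k)ᶜ).Nonempty := by
      intro Z hZ
      rw [Set.inter_compl_nonempty_iff]
      intro hsub
      exact hX (UFPProof.supp_superset h hsub hZ)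
    have hNB : Filter.NeBot (UFPProof.suppFilter h ⊓ Filter.principal ((⋃ k, U k)ᶜ)) :=
      Filter.inf_principal_neBot_iff.2 hne
    haveI := hNB
    obtain ⟨v, hv⟩ :=
      Ultrafilter.exists_le (UFPProof.suppFilter h ⊓ Filter.principal ((⋃ k, U k)ᶜ))
    have hv1 : (v : Filter I) ≤ UFPProof.suppFilter h := hv.trans inf_le_left
    have hv2 : (⋃ k, U k)ᶜ ∈ v :=
      Filter.le_def.1 hv _ (Filter.mem_inf_of_right (Filter.mem_principal_self _))
    obtain ⟨k, hk⟩ := husurj v hv1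
    have hXv : (⋃ k, U k) ∈ v := by
      rw [← hk]
      exact Filter.mem_of_superset (hU k) (Set.subset_iUnion U k)
    exact (Ultrafilter.compl_notMem_iff.2 hXv) hv2

end
end
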